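/- arXiv:2510.08957 — 14 statements merged into one kernel-verified Lean document; each statement's English description precedes it below -/
import Mathlib

section
/- Let p be a real polynomial of even degree n ≥ 2. Then ♯_r[(n−1)(p')² − n·p·p''] + ♯_r p > 0 if and only if one of the following four cases holds: (1) p has a real zero; (2) p has no real zeros and p' has at least three distinct real zeros; (3) p has no real zeros and p' has a real zero of multiplicity greater than 1; (4) p has no real zeros, p' has exactly one real zero w, which is simple, so that p'(x) = C(x)·(x−w) for a real polynomial C with C(w) ≠ 0, and the polynomial (n−1)·C(x)²·(x−w)² − n·p(x)·C'(x)·(x−w) − n·C(x)·p(x) has at least one real zero. -/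
open Polynomial Filter Set

/-- A real polynomial with no real zero has constant sign. -/
lemma shapiro_sign_const (P : Polynomial ℝ) (h : ∀ x, P.eval x ≠ 0) :
    (∀ x, 0 < P.eval x) ∨ (∀ x, P.eval x < 0) := by
  by_contra hc
  push_neg at hc
  obtain ⟨⟨a, ha⟩, ⟨b, hb⟩⟩ := hc
  have ha' : P.eval a < 0 := lt_of_le_of_ne ha (h a)
  have hb' : 0 < P.eval b := lt_of_le_of_ne hb (Ne.symm (h b))
  have hcont : ContinuousOn (fun x => P.eval x) (Set.uIcc a b) :=
    (P.continuous_aeval).continuousOn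
  have h0 : (0:ℝ) ∈ Set.uIcc (P.eval a) (P.eval b) :=
    Set.mem_uIcc.mpr (Or.inl ⟨ha'.le, hb'.le⟩)
  obtain ⟨c, _, hc⟩ := intermediate_value_uIcc hcont h0
  exact h c hc

/-- A positive polynomial has even-ish degree: odd degree implies it can't be everywhere
positive. -/
lemma shapiro_odd_not_pos (r : Polynomial ℝ) (hodd : Odd r.natDegree)
    (hp : ∀ x, 0 < r.eval x) : False := by
  have hr0 : r ≠ 0 := by
    rintro rfl; simp [Nat.odd_iff] at hodd
  have hdegpos : 0 < r.degree := natDegree_pos_iff_degree_pos.mp hodd.pos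
  rcases lt_trichotomy r.leadingCoeff 0 with hlc | hlc | hlc
  · have ht : Tendsto (fun x => r.eval x) atTop atBot :=
      tendsto_atBot_of_leadingCoeff_nonpos r hdegpos hlc.le
    obtain ⟨b, hb⟩ := (ht.eventually_le_atBot (-1)).exists
    linarith [hp b]
  · exact absurd hlc (leadingCoeff_ne_zero.mpr hr0)
  · set s : Polynomial ℝ := r.comp (-X) with hs
    have hX : (-X : Polynomial ℝ).natDegree = 1 := by simp
    have hlcs : s.leadingCoeff = -r.leadingCoeff := by
      rw [hs, leadingCoeff_comp (by rw [hX]; norm_num)]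
      have : (-X : Polynomial ℝ).leadingCoeff = -1 := by simp
      rw [this, hodd.neg_one_pow]; ring
    have hnds : s.natDegree = r.natDegree := by
      rw [hs, natDegree_comp, hX, mul_one]
    have hdegs : 0 < s.degree := by
      rw [← natDegree_pos_iff_degree_pos, hnds]; exact hodd.pos
    have ht : Tendsto (fun x => s.eval x) atTop atBot :=
      tendsto_atBot_of_leadingCoeff_nonpos s hdegs (by rw [hlcs]; linarith)
    obtain ⟨b, hb⟩ := (ht.eventually_le_atBot (-1)).exists
    have : s.eval b = r.eval (-b) := by rw [hs, eval_comp]; simp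
    rw [this] at hb
    linarith [hp (-b)]

lemma shapiro_odd_root (r : Polynomial ℝ) (hodd : Odd r.natDegree) :
    ∃ x, r.eval x = 0 := by
  by_contra hno
  push_neg at hno
  rcases shapiro_sign_const r hno with hp | hn
  · exact shapiro_odd_not_pos r hodd hp
  · refine shapiro_odd_not_pos (-r) (by rwa [natDegree_neg]) ?_
    intro x; simp only [eval_neg]; linarith [hn x]

/-- A concave positive function on ℝ is constant. -/
lemma shapiro_concave_pos_const {h : ℝ → ℝ} (hc : ConcaveOn ℝ Set.univ h)
    (hpos : ∀ x, 0 < h x) (a b : ℝ) : h a = h b := by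
  have key : ∀ u v : ℝ, ¬ (h u < h v) := by
    intro u v hlt
    have hhu := hpos u
    have hvu : 0 < h v - h u := by linarith
    set s : ℝ := h u / (h v - h u) + 1 with hs_def
    have hs : 0 < s := by rw [hs_def]; positivity
    have h1s : 0 < 1 + s := by linarith
    have hαβ : 1/(1+s) + s/(1+s) = 1 := by field_simp
    have hcomb := hc.2 (Set.mem_univ (u + s*(u-v))) (Set.mem_univ v)
      (by positivity : (0:ℝ) ≤ 1/(1+s)) (by positivity : (0:ℝ) ≤ s/(1+s)) hαβ
    have hpoint : (1/(1+s)) • (u + s*(u-v)) + (s/(1+s)) • v = u := by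
      simp only [smul_eq_mul]; field_simp; ring
    rw [hpoint] at hcomb
    simp only [smul_eq_mul] at hcomb
    have hx_pos := hpos (u + s*(u-v))
    have hcomb2 : h (u+s*(u-v)) + s * h v ≤ (1+s) * h u := by
      have h2 := mul_le_mul_of_nonneg_left hcomb h1s.le
      field_simp at h2
      linarith
    have hkey : s * (h v - h u) > h u := by
      rw [hs_def]
      field_simp
      nlinarith
    nlinarith
  rcases lt_trichotomy (h a) (h b) with hl | he | hl
  · exact absurd hl (key a b)
  · exact he
  · exact absurd hl (key b a)

lemma shapiro_auxA (P : Polynomial ℝ) (n : ℕ) (hn : 1 ≤ n) (hdeg : 1 ≤ P.natDegree)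
    (hpos : ∀ x, 0 < P.eval x)
    (hq : ∀ x, 0 ≤ ((n:ℝ) - 1) * ((derivative P).eval x)^2
        - (n:ℝ) * P.eval x * ((derivative (derivative P)).eval x)) : False := by
  have hn0 : (0:ℝ) < (n:ℝ) := by exact_mod_cast Nat.lt_of_lt_of_le Nat.zero_lt_one hn
  set α : ℝ := (n:ℝ)⁻¹ with hα_def
  have hα : 0 < α := by positivity
  set h : ℝ → ℝ := fun x => P.eval x ^ α with hh_def
  set g : ℝ → ℝ := fun x => (derivative P).eval x * α * P.eval x ^ (α - 1) with hg_def
  set G : ℝ → ℝ := fun x =>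
      (derivative (derivative P)).eval x * α * P.eval x ^ (α - 1) +
      ((derivative P).eval x * α) *
        ((derivative P).eval x * (α - 1) * P.eval x ^ (α - 1 - 1)) with hG_def
  have hd1 : ∀ x, HasDerivAt h (g x) x := fun x =>
    (P.hasDerivAt x).rpow_const (Or.inl (hpos x).ne')
  have hd2 : ∀ x, HasDerivAt g (G x) x := fun x =>
    (((derivative P).hasDerivAt x).mul_const α).mul
      ((P.hasDerivAt x).rpow_const (Or.inl (hpos x).ne'))
  have hG_nonpos : ∀ x, G x ≤ 0 := by
    intro x
    set u := P.eval x with hu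
    set v := (derivative P).eval x with hv
    set w := (derivative (derivative P)).eval x with hw
    have hu0 : 0 < u := hpos x
    have e1 : u ^ (α - 1) = u ^ (α - 1 - 1) * u := by
      conv_lhs => rw [show α - 1 = (α - 1 - 1) + 1 by ring, Real.rpow_add hu0, Real.rpow_one]
    have e2 : G x = α * u ^ (α - 1 - 1) * (w * u + (α - 1) * v ^ 2) := by
      rw [hG_def]
      simp only
      rw [e1]; ring
    rw [e2]
    have hru : 0 < u ^ (α - 1 - 1) := Real.rpow_pos_of_pos hu0 _
    have hbr : w * u + (α - 1) * v ^ 2 ≤ 0 := by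
      have hqx := hq x
      have e3 : w * u + (α - 1) * v ^ 2
          = -((((n:ℝ) - 1) * v ^ 2 - (n:ℝ) * u * w)) / n := by
        rw [hα_def]; field_simp; ring
      rw [e3]
      apply div_nonpos_of_nonpos_of_nonneg _ hn0.le
      linarith
    exact mul_nonpos_of_nonneg_of_nonpos (by positivity) hbr
  -- h is concave
  have hdiff : Differentiable ℝ h := fun x => (hd1 x).differentiableAt
  have hderiv : deriv h = g := funext fun x => (hd1 x).deriv
  have hdiff2 : Differentiable ℝ (deriv h) := by
    rw [hderiv]; exact fun x => (hd2 x).differentiableAt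
  have hconc : ConcaveOn ℝ Set.univ h := by
    apply concaveOn_univ_of_deriv2_nonpos hdiff hdiff2
    intro x
    have : deriv^[2] h x = deriv (deriv h) x := by
      rw [show (2:ℕ) = 1 + 1 from rfl, Function.iterate_add_apply]
      simp
    rw [this, hderiv]
    rw [(hd2 x).deriv]
    exact hG_nonpos x
  have hhpos : ∀ x, 0 < h x := fun x => Real.rpow_pos_of_pos (hpos x) _
  have hconst : ∀ x, P.eval x = P.eval 0 := by
    intro x
    have h1 : h x = h 0 := shapiro_concave_pos_const hconc hhpos x 0
    have e : ∀ y : ℝ, P.eval y = h y ^ (n:ℝ) := by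
      intro y
      rw [hh_def]
      simp only
      rw [← Real.rpow_mul (hpos y).le, hα_def, inv_mul_cancel₀ hn0.ne', Real.rpow_one]
    rw [e x, e 0, h1]
  have : P = C (P.eval 0) := by
    apply Polynomial.funext
    intro r
    rw [hconst r, eval_C]
  rw [this, natDegree_C] at hdeg
  omega

lemma shapiro_auxB (P : Polynomial ℝ) (n : ℕ) (hn : 1 ≤ n)
    (hpos : ∀ x, 0 < P.eval x)
    (hq : ∀ x, ((n:ℝ) - 1) * ((derivative P).eval x)^2
        - (n:ℝ) * P.eval x * ((derivative (derivative P)).eval x) < 0) :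
    ∀ x y, (derivative P).eval x = 0 → (derivative P).eval y = 0 → x = y := by
  have hn0 : (0:ℝ) < (n:ℝ) := by exact_mod_cast Nat.lt_of_lt_of_le Nat.zero_lt_one hn
  have hn1 : (1:ℝ) ≤ (n:ℝ) := by exact_mod_cast hn
  have hdd : ∀ x, 0 < (derivative (derivative P)).eval x := by
    intro x
    have h1 := hq x
    have h2 := hpos x
    have h3 : 0 ≤ ((n:ℝ) - 1) * ((derivative P).eval x)^2 := by
      apply mul_nonneg (by linarith) (sq_nonneg _)
    by_contra hcon
    push_neg at hcon
    nlinarith [mul_nonneg hn0.le (mul_nonneg h2.le (neg_nonneg.mpr hcon))]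
  have hsm : StrictMono (fun x => (derivative P).eval x) := by
    apply strictMono_of_deriv_pos
    intro x
    rw [Polynomial.deriv]
    exact hdd x
  intro x y hx hy
  exact hsm.injective (by rw [hx, hy])

/-- If `P' = (X - C a) * g` and `g a = 0` then `P'' a = 0`. -/
lemma shapiro_dbl (P' : Polynomial ℝ) (a : ℝ) (g : Polynomial ℝ)
    (hfac : P' = (X - C a) * g) (hg : g.eval a = 0) :
    (derivative P').eval a = 0 := by
  rw [hfac, derivative_mul]
  simp [hg]

/-- Sign normalization: replace p by a positive polynomial with the same data. -/
lemma shapiro_core (p : Polynomial ℝ) (hne : ∀ x, p.eval x ≠ 0) :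
    ∃ P : Polynomial ℝ, (∀ x, 0 < P.eval x) ∧ P.natDegree = p.natDegree ∧
      (∀ x, ((p.natDegree:ℝ)-1)*((derivative P).eval x)^2
          - (p.natDegree:ℝ)*P.eval x*((derivative (derivative P)).eval x)
        = ((p.natDegree:ℝ)-1)*((derivative p).eval x)^2
          - (p.natDegree:ℝ)*p.eval x*((derivative (derivative p)).eval x)) ∧
      (∀ x, (derivative P).eval x = 0 ↔ (derivative p).eval x = 0) := by
  rcases shapiro_sign_const p hne with hp | hn
  · exact ⟨p, hp, rfl, fun x => rfl, fun x => Iff.rfl⟩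
  · refine ⟨-p, fun x => by simp only [eval_neg]; linarith [hn x], natDegree_neg p, ?_, ?_⟩
    · intro x
      simp only [derivative_neg, eval_neg]
      ring
    · intro x
      simp only [derivative_neg, eval_neg, neg_eq_zero]

/-- Shapiro's Conjecture 12 holds iff one of four cases holds. -/
theorem shapiro_conj12_positive_iff (p : Polynomial ℝ)
    (hdeg : 2 ≤ p.natDegree) (heven : Even p.natDegree) :
    0 < ((Polynomial.C ((p.natDegree : ℝ) - 1) * (derivative p) ^ 2 -
            Polynomial.C (p.natDegree : ℝ) * p *
              derivative (derivative p)).roots.toFinset.card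
          + p.roots.toFinset.card) ↔
      ((∃ x : ℝ, p.eval x = 0) ∨
       ((∀ x : ℝ, p.eval x ≠ 0) ∧
         ∃ x y z : ℝ, x ≠ y ∧ x ≠ z ∧ y ≠ z ∧
           (derivative p).eval x = 0 ∧ (derivative p).eval y = 0 ∧
           (derivative p).eval z = 0) ∨
       ((∀ x : ℝ, p.eval x ≠ 0) ∧
         ∃ w : ℝ, 2 ≤ Polynomial.rootMultiplicity w (derivative p)) ∨
       ((∀ x : ℝ, p.eval x ≠ 0) ∧
         ∃ (w : ℝ) (c : Polynomial ℝ),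
           derivative p = c * (X - Polynomial.C w) ∧
           c.eval w ≠ 0 ∧
           (∀ x : ℝ, (derivative p).eval x = 0 → x = w) ∧
           ∃ x : ℝ,
             (Polynomial.C ((p.natDegree : ℝ) - 1) * c ^ 2 * (X - Polynomial.C w) ^ 2 -
              Polynomial.C (p.natDegree : ℝ) * p * derivative c * (X - Polynomial.C w) -
              Polynomial.C (p.natDegree : ℝ) * c * p).eval x = 0)) := by
  set Q : Polynomial ℝ := Polynomial.C ((p.natDegree : ℝ) - 1) * (derivative p) ^ 2 -
      Polynomial.C (p.natDegree : ℝ) * p * derivative (derivative p) with hQ_def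
  have hn1 : 1 ≤ p.natDegree := by omega
  have hQeval : ∀ x, Q.eval x = ((p.natDegree:ℝ)-1)*((derivative p).eval x)^2
      - (p.natDegree:ℝ)*p.eval x*((derivative (derivative p)).eval x) := by
    intro x
    rw [hQ_def]
    simp [eval_mul, eval_pow]
  -- facts about derivative p
  have hDdeg' : (derivative p).degree = ((p.natDegree - 1 : ℕ) : WithBot ℕ) :=
    degree_derivative_eq p (by omega)
  have hDne : derivative p ≠ 0 := by
    intro h0
    rw [h0, degree_zero] at hDdeg'
    exact (by simp : ((p.natDegree - 1 : ℕ) : WithBot ℕ) ≠ ⊥) hDdeg'.symm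
  have hDdeg : (derivative p).natDegree = p.natDegree - 1 := natDegree_eq_of_degree_eq_some hDdeg'
  have hDodd : Odd (derivative p).natDegree := by
    obtain ⟨k, hk⟩ := heven
    rw [hDdeg, Nat.odd_iff]
    omega
  have mult_iff : ∀ w : ℝ, 2 ≤ rootMultiplicity w (derivative p) ↔
      (derivative p).eval w = 0 ∧ (derivative (derivative p)).eval w = 0 := by
    intro w
    rw [show (2 ≤ rootMultiplicity w (derivative p)) = (1 < rootMultiplicity w (derivative p))
      from rfl, one_lt_rootMultiplicity_iff_isRoot hDne]
    rfl
  -- the case-4 polynomial equals Q, given the factorization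
  have hQR : ∀ (w : ℝ) (c : Polynomial ℝ), derivative p = c * (X - Polynomial.C w) →
      (Polynomial.C ((p.natDegree : ℝ) - 1) * c ^ 2 * (X - Polynomial.C w) ^ 2 -
       Polynomial.C (p.natDegree : ℝ) * p * derivative c * (X - Polynomial.C w) -
       Polynomial.C (p.natDegree : ℝ) * c * p) = Q := by
    intro w c hd
    have hdd : derivative (derivative p) = derivative c * (X - Polynomial.C w) + c := by
      rw [hd, derivative_mul]
      simp
    rw [hQ_def, hdd, hd]
    ring
  constructor
  · -- forward
    intro hcard
    by_cases hroot : ∃ x, p.eval x = 0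
    · exact Or.inl hroot
    push_neg at hroot
    have hpz : p.roots = 0 :=
      Multiset.eq_zero_of_forall_notMem fun a ha => hroot a (mem_roots'.mp ha).2
    rw [hpz] at hcard
    simp only [Multiset.toFinset_zero, Finset.card_empty, add_zero] at hcard
    obtain ⟨x, hxmem⟩ := Finset.card_pos.mp hcard
    have hQx : Q.eval x = 0 := (mem_roots'.mp (Multiset.mem_toFinset.mp hxmem)).2
    obtain ⟨w, hw⟩ := shapiro_odd_root (derivative p) hDodd
    by_cases hm : ∃ v, (derivative p).eval v = 0 ∧ (derivative (derivative p)).eval v = 0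
    · obtain ⟨v, hv1, hv2⟩ := hm
      exact Or.inr (Or.inr (Or.inl ⟨hroot, v, (mult_iff v).mpr ⟨hv1, hv2⟩⟩))
    push_neg at hm
    by_cases h2r : ∃ v, (derivative p).eval v = 0 ∧ v ≠ w
    · obtain ⟨v, hv, hvw⟩ := h2r
      have hfac1 : (X - Polynomial.C w) * (derivative p /ₘ (X - Polynomial.C w)) = derivative p :=
        mul_divByMonic_eq_iff_isRoot.mpr hw
      set c1 := derivative p /ₘ (X - Polynomial.C w) with hc1_def
      have hc1v : c1.eval v = 0 := by
        have h1 : (v - w) * c1.eval v = 0 := by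
          have := congrArg (fun q => Polynomial.eval v q) hfac1
          simpa [hv] using this
        rcases mul_eq_zero.mp h1 with h | h
        · exact absurd (by linarith [sub_eq_zero.mp h] : v = w) hvw
        · exact h
      have hfac2 : (X - Polynomial.C v) * (c1 /ₘ (X - Polynomial.C v)) = c1 :=
        mul_divByMonic_eq_iff_isRoot.mpr hc1v
      set r := c1 /ₘ (X - Polynomial.C v) with hr_def
      have hr0 : r ≠ 0 := by
        intro h0
        rw [h0, mul_zero] at hfac2
        rw [← hfac2, mul_zero] at hfac1
        exact hDne hfac1.symm
      have hc1ne : c1 ≠ 0 := by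
        intro h0
        rw [h0, mul_zero] at hfac1
        exact hDne hfac1.symm
      have hdegr : (derivative p).natDegree = r.natDegree + 2 := by
        rw [← hfac1, ← hfac2, natDegree_mul (X_sub_C_ne_zero w) (by rw [hfac2]; exact hc1ne),
          natDegree_mul (X_sub_C_ne_zero v) hr0, natDegree_X_sub_C, natDegree_X_sub_C]
        omega
      have hoddr : Odd r.natDegree := by
        rw [hDdeg] at hdegr
        rw [Nat.odd_iff]
        rw [Nat.odd_iff] at hDodd
        rw [hDdeg] at hDodd
        omega
      obtain ⟨t, ht⟩ := shapiro_odd_root r hoddr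
      have hD1t : (derivative p).eval t = 0 := by
        rw [← hfac1, ← hfac2]
        simp [ht]
      by_cases htw : t = w
      · have hc1w : c1.eval w = 0 := by
          rw [← hfac2]
          simp [htw ▸ ht]
        exact absurd (shapiro_dbl (derivative p) w c1 hfac1.symm hc1w) (hm w hw)
      by_cases htv : t = v
      · have hfac' : derivative p = (X - Polynomial.C v) * ((X - Polynomial.C w) * r) := by
          rw [← hfac1, ← hfac2]
          ring
        have hg : ((X - Polynomial.C w) * r).eval v = 0 := by
          simp [htv ▸ ht]
        exact absurd (shapiro_dbl (derivative p) v _ hfac' hg) (hm v hv)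
      · exact Or.inr (Or.inl ⟨hroot, w, v, t, Ne.symm hvw, fun h => htw h.symm,
          fun h => htv h.symm, hw, hv, hD1t⟩)
    · push_neg at h2r
      have huniq : ∀ v, (derivative p).eval v = 0 → v = w := by
        intro v hv
        by_contra hvw
        exact hvw (h2r v hv)
      have hfac1 : (X - Polynomial.C w) * (derivative p /ₘ (X - Polynomial.C w)) = derivative p :=
        mul_divByMonic_eq_iff_isRoot.mpr hw
      set c := derivative p /ₘ (X - Polynomial.C w) with hc_def
      have hd : derivative p = c * (X - Polynomial.C w) := by
        rw [← hfac1]; ring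
      have hcw : c.eval w ≠ 0 := by
        intro h0
        exact (hm w hw) (shapiro_dbl (derivative p) w c hfac1.symm h0)
      refine Or.inr (Or.inr (Or.inr ⟨hroot, w, c, hd, hcw, huniq, x, ?_⟩))
      rw [hQR w c hd]
      exact hQx
  · -- reverse
    intro hcases
    have hpne0 : p ≠ 0 := by
      intro h0
      rw [h0, natDegree_zero] at hdeg
      omega
    have hfin : (∀ x, p.eval x ≠ 0) → ∀ t, Q.eval t = 0 →
        0 < Q.roots.toFinset.card + p.roots.toFinset.card := by
      intro hne t ht
      obtain ⟨P, hP, hPdeg, hPq, _⟩ := shapiro_core p hne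
      have hQne : Q ≠ 0 := by
        intro h0
        apply shapiro_auxA P p.natDegree hn1 (by omega) hP
        intro s
        rw [hPq s, ← hQeval s, h0, eval_zero]
      have : 0 < Q.roots.toFinset.card :=
        Finset.card_pos.mpr ⟨t, Multiset.mem_toFinset.mpr (mem_roots'.mpr ⟨hQne, ht⟩)⟩
      omega
    rcases hcases with ⟨x, hx⟩ | ⟨hne, x, y, z, hxy, hxz, hyz, hx, hy, hz⟩ |
      ⟨hne, w, hmult⟩ | ⟨hne, w, c, hd, hcw, huniq, x, hx⟩
    · have : 0 < p.roots.toFinset.card :=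
        Finset.card_pos.mpr ⟨x, Multiset.mem_toFinset.mpr (mem_roots'.mpr ⟨hpne0, hx⟩)⟩
      omega
    · obtain ⟨P, hP, hPdeg, hPq, hPiff⟩ := shapiro_core p hne
      have hQr : ∃ t, Q.eval t = 0 := by
        by_contra hnoq
        push_neg at hnoq
        rcases shapiro_sign_const Q hnoq with hqp | hqn
        · exact shapiro_auxA P p.natDegree hn1 (by omega) hP
            (fun t => by rw [hPq t, ← hQeval t]; exact (hqp t).le)
        · exact hxy (shapiro_auxB P p.natDegree hn1 hP
            (fun t => by rw [hPq t, ← hQeval t]; exact hqn t) x y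
            ((hPiff x).mpr hx) ((hPiff y).mpr hy))
      obtain ⟨t, ht⟩ := hQr
      exact hfin hne t ht
    · obtain ⟨hv1, hv2⟩ := (mult_iff w).mp hmult
      exact hfin hne w (by rw [hQeval w, hv1, hv2]; ring)
    · rw [hQR w c hd] at hx
      exact hfin hne x hx
end

section
/- Let p be a real polynomial of even degree n ≥ 2. Then ♯_r[(n−1)(p')² − n·p·p''] + ♯_r p = 0 if and only if p has no real zeros, p' has exactly one real zero w, which is simple, so that p'(x) = C(x)·(x−w) for a real polynomial C with C(w) ≠ 0, and the polynomial (n−1)·C(x)²·(x−w)² − n·p(x)·C'(x)·(x−w) − n·C(x)·p(x) has no real zeros. -/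
/-!
Let `q = (n - 1) p' ^ 2 - n p p''`. Where `p ≠ 0`, the function
`h = p' · (p ^ 2) ^ (-(n - 1) / (2n))` (`nthRootSlope`) is, up to the sign of `p`, `n` times the
derivative of `|p| ^ (1 / n)`, and `h' = -(p ^ 2) ^ (-(n - 1) / (2n) - 1) · p · q / n`. If neither
`p` nor `q` has a real zero, `h'` never vanishes, so by Darboux `h` is strictly monotone and `p'`,
whose zeros are those of `h`, has at most one zero `w`; it has one since its degree is odd, and it
is simple because `q(w) = -n p(w) p''(w)`. The case `q = 0`, invisible to `roots`, cannot occur: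
`h` would be constant, hence zero, and `p'` would vanish. Conversely the last polynomial of the
statement is `q` rewritten through `p' = c · (X - w)`.
-/

open Polynomial

namespace Polynomial

variable {p c : ℝ[X]} {n w : ℝ}

theorem exists_isRoot_of_odd_natDegree_real (h : Odd p.natDegree) : ∃ x, p.IsRoot x := by
  by_contra! hp
  rcases le_total 0 p.leadingCoeff with hlc | hlc
  · have hpos := zero_lt_eval_of_roots_lt_of_leadingCoeff_nonneg (x := 0)
      (fun y hy => (hp y hy).elim) hlc
    have hneg := zero_lt_negOnePow_mul_eval_of_lt_roots_of_leadingCoeff_nonneg (x := 0)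
      (fun y hy => (hp y hy).elim) hlc
    simp only [Int.coe_negOnePow, Int.natAbs_natCast, h.neg_one_pow, neg_mul, one_mul] at hneg
    linarith
  · have hneg := eval_lt_zero_of_roots_lt_of_leadingCoeff_nonpos (x := 0)
      (fun y hy => (hp y hy).elim) hlc
    have hpos := negOnePow_mul_eval_lt_zero_of_lt_roots_of_leadingCoeff_nonpos (x := 0)
      (fun y hy => (hp y hy).elim) hlc
    simp only [Int.coe_negOnePow, Int.natAbs_natCast, h.neg_one_pow, neg_mul, one_mul] at hpos
    linarith

theorem roots_eq_zero_of_forall_eval_ne_zero (h : ∀ x, p.eval x ≠ 0) : p.roots = 0 :=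
  Multiset.eq_zero_of_forall_notMem fun x hx => h x (isRoot_of_mem_roots hx)

theorem eval_ne_zero_of_roots_eq_zero (hp : p ≠ 0) (h : p.roots = 0) (x : ℝ) : p.eval x ≠ 0 :=
  fun hx => by simpa [h] using (mem_roots hp).2 hx

noncomputable def laguerre (n : ℝ) (p : ℝ[X]) : ℝ[X] :=
  C (n - 1) * derivative p ^ 2 - C n * p * derivative (derivative p)

theorem laguerre_eq_of_derivative_eq_mul (h : derivative p = c * (X - C w)) :
    C (n - 1) * c ^ 2 * (X - C w) ^ 2 - C n * p * derivative c * (X - C w) - C n * c * p =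
      laguerre n p := by
  rw [laguerre, h, derivative_mul, derivative_X_sub_C]
  ring

noncomputable def nthRootSlope (n : ℝ) (p : ℝ[X]) (x : ℝ) : ℝ :=
  (derivative p).eval x * (p.eval x ^ 2) ^ (-(n - 1) / (2 * n))

theorem hasDerivAt_nthRootSlope (hn : n ≠ 0) {x : ℝ} (hx : p.eval x ≠ 0) :
    HasDerivAt (nthRootSlope n p)
      (-((p.eval x ^ 2) ^ (-(n - 1) / (2 * n) - 1) * p.eval x * (laguerre n p).eval x / n)) x := by
  have hsq : p.eval x ^ 2 ≠ 0 := pow_ne_zero 2 hx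
  refine (((derivative p).hasDerivAt x).mul
    (((p.hasDerivAt x).pow 2).rpow_const (p := -(n - 1) / (2 * n)) (Or.inl hsq))).congr_deriv ?_
  simp only [laguerre, eval_sub, eval_mul, eval_C, eval_pow, Pi.pow_apply]
  rw [Real.rpow_sub_one hsq]
  generalize (eval x p ^ 2) ^ (-(n - 1) / (2 * n)) = R
  field_simp
  ring

theorem nthRootSlope_eq_zero_iff {x : ℝ} (hx : p.eval x ≠ 0) :
    nthRootSlope n p x = 0 ↔ (derivative p).eval x = 0 := by
  rw [nthRootSlope, mul_eq_zero, or_iff_left (Real.rpow_pos_of_pos (sq_pos_of_ne_zero hx) _).ne']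

theorem nthRootSlope_injective (hn : n ≠ 0) (hp : ∀ x, p.eval x ≠ 0)
    (hq : ∀ x, (laguerre n p).eval x ≠ 0) : Function.Injective (nthRootSlope n p) := by
  have hderiv x := hasDerivAt_nthRootSlope hn (hp x)
  have hne x : -((p.eval x ^ 2) ^ (-(n - 1) / (2 * n) - 1) * p.eval x * (laguerre n p).eval x / n)
      ≠ 0 := by
    have := (Real.rpow_pos_of_pos (sq_pos_of_ne_zero (hp x)) (-(n - 1) / (2 * n) - 1)).ne'
    exact neg_ne_zero.2 (div_ne_zero (mul_ne_zero (mul_ne_zero this (hp x)) (hq x)) hn)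
  rcases hasDerivWithinAt_forall_lt_or_forall_gt_of_forall_ne convex_univ
    (fun x _ => (hderiv x).hasDerivWithinAt) (fun x _ => hne x) with hneg | hpos
  · exact (strictAnti_of_hasDerivAt_neg hderiv fun x => hneg x trivial).injective
  · exact (strictMono_of_hasDerivAt_pos hderiv fun x => hpos x trivial).injective

theorem laguerre_ne_zero (hn : n ≠ 0) (hp : ∀ x, p.eval x ≠ 0) (hp' : derivative p ≠ 0)
    (hw : (derivative p).eval w = 0) : laguerre n p ≠ 0 := by
  intro hq
  have hconst (x : ℝ) : nthRootSlope n p x = nthRootSlope n p w :=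
    is_const_of_deriv_eq_zero (fun x => (hasDerivAt_nthRootSlope hn (hp x)).differentiableAt)
      (fun x => by simp [(hasDerivAt_nthRootSlope hn (hp x)).deriv, hq]) x w
  refine hp' (Polynomial.funext fun x => ?_)
  rw [eval_zero, ← nthRootSlope_eq_zero_iff (hp x), hconst, nthRootSlope_eq_zero_iff (hp w), hw]

end Polynomial

/-- Shapiro's Conjecture 12 fails exactly in the described case. -/
theorem shapiro_conj12_zero_iff (p : Polynomial ℝ)
    (hdeg : 2 ≤ p.natDegree) (heven : Even p.natDegree) :
    ((Polynomial.C ((p.natDegree : ℝ) - 1) * (derivative p) ^ 2 -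
        Polynomial.C (p.natDegree : ℝ) * p *
          derivative (derivative p)).roots.toFinset.card
      + p.roots.toFinset.card) = 0 ↔
      ((∀ x : ℝ, p.eval x ≠ 0) ∧
        ∃ (w : ℝ) (c : Polynomial ℝ),
          derivative p = c * (X - Polynomial.C w) ∧
          c.eval w ≠ 0 ∧
          (∀ x : ℝ, (derivative p).eval x = 0 → x = w) ∧
          ∀ x : ℝ,
            (Polynomial.C ((p.natDegree : ℝ) - 1) * c ^ 2 * (X - Polynomial.C w) ^ 2 -
             Polynomial.C (p.natDegree : ℝ) * p * derivative c * (X - Polynomial.C w) -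
             Polynomial.C (p.natDegree : ℝ) * c * p).eval x ≠ 0) := by
  have hn : (p.natDegree : ℝ) ≠ 0 := by positivity
  change (laguerre p.natDegree p).roots.toFinset.card + _ = 0 ↔ _
  simp only [Nat.add_eq_zero_iff, Finset.card_eq_zero, Multiset.toFinset_eq_empty]
  constructor
  · rintro ⟨hq, hroots⟩
    have hp := eval_ne_zero_of_roots_eq_zero (by rintro rfl; simp at hdeg) hroots
    have hp' : derivative p ≠ 0 := derivative_ne_zero.2 (by omega)
    obtain ⟨w, hw⟩ := exists_isRoot_of_odd_natDegree_real (p := derivative p) <| by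
      obtain ⟨m, hm⟩ := heven
      exact ⟨m - 1, by rw [natDegree_derivative]; omega⟩
    have hq := eval_ne_zero_of_roots_eq_zero (laguerre_ne_zero hn hp hp' hw) hq
    have hc : derivative p = (derivative p /ₘ (X - C w)) * (X - C w) := by
      rw [mul_comm, mul_divByMonic_eq_iff_isRoot.2 hw]
    refine ⟨hp, w, _, hc, fun hcw => hq w ?_,
      fun x hx => nthRootSlope_injective hn hp hq ?_, fun x => ?_⟩
    · simp [← laguerre_eq_of_derivative_eq_mul hc, hcw]
    · rw [(nthRootSlope_eq_zero_iff (hp x)).2 hx, (nthRootSlope_eq_zero_iff (hp w)).2 hw]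
    · rw [laguerre_eq_of_derivative_eq_mul hc]
      exact hq x
  · rintro ⟨hp, w, c, hc, -, -, hq⟩
    simp only [laguerre_eq_of_derivative_eq_mul hc] at hq
    exact ⟨roots_eq_zero_of_forall_eval_ne_zero hq, roots_eq_zero_of_forall_eval_ne_zero hp⟩
end

section
/- Let p be a real polynomial of even degree n ≥ 2 such that p has no real zeros, p'' has no real zeros, and p' has exactly one real zero p₀, which is simple. Let K(x) = p'(x)²/(p''(x)·p(x)) (note p(x)·p''(x) > 0 for all real x, so K is continuous and nonnegative on ℝ). If K has no local extremum at any real point other than p₀, then the polynomial Δ(x) = (n−1)·p'(x)² − n·p(x)·p''(x) has no real zeros. -/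
open Polynomial Filter Set Topology

/-- A continuous function with no local extrema strictly to the right of `t`
is injective on `Ici t`. -/
private lemma inj_aux {f : ℝ → ℝ} (hf : Continuous f) {t : ℝ}
    (h : ∀ x, t < x → ¬ IsLocalExtr f x) : Set.InjOn f (Set.Ici t) := by
  have main : ∀ a b : ℝ, t ≤ a → a < b → f a ≠ f b := by
    intro a b hta hab hfab
    have hne : (Set.Icc a b).Nonempty := Set.nonempty_Icc.2 hab.le
    obtain ⟨c, hc, hcmax⟩ := isCompact_Icc.exists_isMaxOn hne hf.continuousOn
    obtain ⟨d, hd, hdmin⟩ := isCompact_Icc.exists_isMinOn hne hf.continuousOn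
    have hmem : ∀ x : ℝ, x ∈ Set.Ioo a b → Set.Icc a b ∈ 𝓝 x := fun x hx =>
      Filter.mem_of_superset (isOpen_Ioo.mem_nhds hx) Set.Ioo_subset_Icc_self
    by_cases hcI : c ∈ Set.Ioo a b
    · exact h c (lt_of_le_of_lt hta hcI.1) (hcmax.isLocalMax (hmem c hcI)).isExtr
    · by_cases hdI : d ∈ Set.Ioo a b
      · exact h d (lt_of_le_of_lt hta hdI.1) (hdmin.isLocalMin (hmem d hdI)).isExtr
      · have hfc : f c = f a := by
          rcases eq_or_lt_of_le hc.1 with he | hlt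
          · rw [← he]
          · rcases eq_or_lt_of_le hc.2 with he | hlt2
            · rw [he, ← hfab]
            · exact absurd ⟨hlt, hlt2⟩ hcI
        have hfd : f d = f a := by
          rcases eq_or_lt_of_le hd.1 with he | hlt
          · rw [← he]
          · rcases eq_or_lt_of_le hd.2 with he | hlt2
            · rw [he, ← hfab]
            · exact absurd ⟨hlt, hlt2⟩ hdI
        set m := (a + b) / 2 with hm
        have hmI : m ∈ Set.Ioo a b := ⟨by simp only [hm]; linarith, by simp only [hm]; linarith⟩
        have hfm : f m = f a := le_antisymm (hfc ▸ hcmax (Set.Ioo_subset_Icc_self hmI))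
          (hfd ▸ hdmin (Set.Ioo_subset_Icc_self hmI))
        have : IsMaxOn f (Set.Icc a b) m := fun x hx => by
          simp only [Set.mem_setOf_eq, hfm]; exact hfc ▸ hcmax hx
        exact h m (lt_of_le_of_lt hta hmI.1) (this.isLocalMax (hmem m hmI)).isExtr
  intro a ha b hb hfab
  by_contra hne
  rcases lt_or_gt_of_ne hne with hlt | hlt
  · exact main a b ha hlt hfab
  · exact main b a hb hlt hfab.symm

private lemma gt_of_inj {f : ℝ → ℝ} (hf : Continuous f) {t a b x : ℝ}
    (hinj : Set.InjOn f (Set.Ici t)) (hta : t ≤ a) (hab : a < b) (hbx : b < x)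
    (hfab : f a < f b) : f b < f x := by
  have haI : a ∈ Set.Ici t := hta
  have hbI : b ∈ Set.Ici t := le_trans hta hab.le
  have hxI : x ∈ Set.Ici t := le_trans hbI hbx.le
  rcases lt_trichotomy (f x) (f b) with hlt | heq | hgt
  · rcases le_or_gt (f x) (f a) with hle | hgt2
    · obtain ⟨c, hc, hfc⟩ := intermediate_value_Icc' hbx.le hf.continuousOn ⟨hle, hfab.le⟩
      have hca : c = a := hinj (le_trans hbI hc.1) haI hfc
      have : b ≤ a := hca ▸ hc.1
      linarith
    · obtain ⟨c, hc, hfc⟩ := intermediate_value_Icc hab.le hf.continuousOn ⟨hgt2.le, hlt.le⟩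
      have hcx : c = x := hinj (le_trans hta hc.1) hxI hfc
      have : x ≤ b := hcx ▸ hc.2
      linarith
  · exact absurd (hinj hbI hxI heq.symm) (ne_of_lt hbx)
  · exact hgt

private lemma main_aux {f : ℝ → ℝ} (hf : Continuous f) {t x₀ : ℝ}
    (hinj : Set.InjOn f (Set.Ici t)) (htx : t < x₀) (hft : f t < f x₀)
    (htend : Filter.Tendsto f Filter.atTop (𝓝 (f x₀))) : False := by
  have h1 : ∀ x, x₀ < x → f x₀ < f x := fun x hx =>
    gt_of_inj hf hinj le_rfl htx hx hft
  have h2 : ∀ x, x₀ + 1 < x → f (x₀ + 1) < f x := fun x hx =>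
    gt_of_inj hf hinj htx.le (lt_add_one x₀) hx (h1 _ (lt_add_one x₀))
  have hev : ∀ᶠ x in Filter.atTop, f (x₀ + 1) ≤ f x :=
    Filter.eventually_atTop.2 ⟨x₀ + 2, fun x hx => (h2 x (by linarith)).le⟩
  have hle := ge_of_tendsto htend hev
  linarith [h1 (x₀ + 1) (lt_add_one x₀)]

private lemma div_tendsto_zero_atBot (P Q : ℝ[X]) (h : P.degree < Q.degree) :
    Filter.Tendsto (fun x => eval x P / eval x Q) Filter.atBot (𝓝 0) := by
  have hQ : Q ≠ 0 := by
    intro h0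
    rw [h0, degree_zero] at h
    exact absurd h (by simp)
  by_cases hP : P = 0
  · simpa [hP] using (tendsto_const_nhds : Filter.Tendsto (fun _ : ℝ => (0:ℝ)) _ _)
  · set P' := P.comp (-X) with hP'def
    set Q' := Q.comp (-X) with hQ'def
    have hcompcomp : ∀ R : ℝ[X], (R.comp (-X)).comp (-X) = R := by
      intro R
      rw [comp_assoc]
      simp
    have hP' : P' ≠ 0 := fun h0 => hP (by rw [← hcompcomp P, ← hP'def, h0, zero_comp])
    have hQ' : Q' ≠ 0 := fun h0 => hQ (by rw [← hcompcomp Q, ← hQ'def, h0, zero_comp])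
    have hndP : P'.natDegree = P.natDegree := by
      rw [hP'def, natDegree_comp]
      simp
    have hndQ : Q'.natDegree = Q.natDegree := by
      rw [hQ'def, natDegree_comp]
      simp
    have hdeg : P'.degree < Q'.degree := by
      rw [degree_eq_natDegree hP', degree_eq_natDegree hQ', hndP, hndQ]
      rw [degree_eq_natDegree hP, degree_eq_natDegree hQ] at h
      exact h
    have htend := Polynomial.div_tendsto_zero_of_degree_lt P' Q' hdeg
    have hcomp := htend.comp tendsto_neg_atBot_atTop
    convert hcomp using 1
    funext x
    simp [Function.comp, hP'def, hQ'def, eval_comp]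

/-- if the gain K has no local extremum away from p₀,
then Δ = (n−1)(p')² − n·p·p'' has no real zeros. -/
theorem no_breakaway_no_real_zero (p : Polynomial ℝ)
    (hdeg : 2 ≤ p.natDegree) (heven : Even p.natDegree)
    (hp : ∀ x : ℝ, p.eval x ≠ 0)
    (hp'' : ∀ x : ℝ, (derivative (derivative p)).eval x ≠ 0)
    (p₀ : ℝ) (hp₀ : (derivative p).eval p₀ = 0)
    (huniq : ∀ x : ℝ, (derivative p).eval x = 0 → x = p₀)
    (hsimple : Polynomial.rootMultiplicity p₀ (derivative p) = 1)
    (hnoext : ∀ x : ℝ, x ≠ p₀ →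
      ¬ IsLocalExtr (fun y : ℝ => ((derivative p).eval y) ^ 2 /
          (((derivative (derivative p)).eval y) * p.eval y)) x) :
    ∀ x : ℝ,
      (Polynomial.C ((p.natDegree : ℝ) - 1) * (derivative p) ^ 2 -
        Polynomial.C (p.natDegree : ℝ) * p * derivative (derivative p)).eval x ≠ 0 := by
  intro x₀ hΔ0
  set n := p.natDegree with hn
  set K : ℝ → ℝ := fun y : ℝ => ((derivative p).eval y) ^ 2 /
      (((derivative (derivative p)).eval y) * p.eval y) with hKdef
  set A : Polynomial ℝ := Polynomial.C ((n : ℝ) - 1) * (derivative p) ^ 2 with hA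
  set B : Polynomial ℝ := Polynomial.C (n : ℝ) * p * derivative (derivative p) with hB
  set D : Polynomial ℝ := Polynomial.C ((n : ℝ) - 1) * (p * derivative (derivative p)) with hD
  have hn2 : (2 : ℝ) ≤ (n : ℝ) := by exact_mod_cast hdeg
  have hn1 : ((n : ℝ) - 1) ≠ 0 := by linarith
  have hnne : (n : ℝ) ≠ 0 := by linarith
  have hpne : p ≠ 0 := fun h => hp 0 (by simp [h])
  have ha : p.leadingCoeff ≠ 0 := leadingCoeff_ne_zero.2 hpne
  have hp'ne : derivative p ≠ 0 := by
    intro h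
    have := natDegree_eq_zero_of_derivative_eq_zero h
    omega
  have hp''ne : derivative (derivative p) ≠ 0 := fun h => hp'' 0 (by simp [h])
  -- degrees and leading coefficients of the derivatives
  have hd1 : (derivative p).degree = ((n - 1 : ℕ) : WithBot ℕ) := by
    rw [hn]; exact degree_derivative_eq p (by omega)
  have hnd1 : (derivative p).natDegree = n - 1 := natDegree_eq_of_degree_eq_some hd1
  have hnd2 : (derivative (derivative p)).natDegree = n - 2 := by
    have h2 : (derivative (derivative p)).degree = (((n - 1) - 1 : ℕ) : WithBot ℕ) := by
      rw [← hnd1]; exact degree_derivative_eq _ (by rw [hnd1]; omega)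
    have := natDegree_eq_of_degree_eq_some h2
    omega
  have hcast1 : ((n - 1 : ℕ) : ℝ) = (n : ℝ) - 1 := by
    rw [Nat.cast_sub (by omega : 1 ≤ n)]; norm_num
  have hcast2 : ((n - 2 : ℕ) : ℝ) = (n : ℝ) - 2 := by
    rw [Nat.cast_sub (by omega : 2 ≤ n)]; norm_num
  have hlc1 : (derivative p).leadingCoeff = p.leadingCoeff * (n : ℝ) := by
    rw [Polynomial.leadingCoeff, hnd1, coeff_derivative,
      (by omega : n - 1 + 1 = n), hn, coeff_natDegree, ← hn, hcast1]
    ring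
  have hlc2 : (derivative (derivative p)).leadingCoeff
      = p.leadingCoeff * (n : ℝ) * ((n : ℝ) - 1) := by
    rw [Polynomial.leadingCoeff, hnd2, coeff_derivative,
      (by omega : n - 2 + 1 = n - 1), ← hnd1, coeff_natDegree, hlc1, hcast2]
    ring
  -- Δ = A - B has degree < degree D
  have hAne : A ≠ 0 := mul_ne_zero (C_ne_zero.2 hn1) (pow_ne_zero 2 hp'ne)
  have hBne : B ≠ 0 := mul_ne_zero (mul_ne_zero (C_ne_zero.2 hnne) hpne) hp''ne
  have hDne : D ≠ 0 := mul_ne_zero (C_ne_zero.2 hn1) (mul_ne_zero hpne hp''ne)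
  have hndA : A.natDegree = 2 * (n - 1) := by
    rw [hA, natDegree_C_mul hn1, natDegree_pow, hnd1]
  have hndB : B.natDegree = n + (n - 2) := by
    rw [hB, natDegree_mul (mul_ne_zero (C_ne_zero.2 hnne) hpne) hp''ne,
      natDegree_C_mul hnne, hnd2, ← hn]
  have hndD : D.natDegree = n + (n - 2) := by
    rw [hD, natDegree_C_mul hn1, natDegree_mul hpne hp''ne, hnd2, ← hn]
  have hdAB : A.degree = B.degree := by
    rw [degree_eq_natDegree hAne, degree_eq_natDegree hBne, hndA, hndB]
    norm_cast
    omega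
  have hlcAB : A.leadingCoeff = B.leadingCoeff := by
    rw [hA, hB, leadingCoeff_mul, leadingCoeff_mul, leadingCoeff_mul, leadingCoeff_pow,
      leadingCoeff_C, leadingCoeff_C, hlc1, hlc2]
    ring
  have hdegΔ : (A - B).degree < D.degree := by
    have h1 : (A - B).degree < A.degree := degree_sub_lt hdAB hAne hlcAB
    have h2 : A.degree = D.degree := by
      rw [degree_eq_natDegree hAne, degree_eq_natDegree hDne, hndA, hndD]
      norm_cast
      omega
    exact h2 ▸ h1
  -- the key identity for K
  have hKeq : ∀ x : ℝ, K x = (A - B).eval x / D.eval x + (n : ℝ) / ((n : ℝ) - 1) := by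
    intro x
    have h1 := hp x
    have h2 := hp'' x
    rw [hKdef]
    simp only [hA, hB, hD, eval_sub, eval_mul, eval_pow, eval_C]
    field_simp
    ring
  -- values of K
  have hKx₀ : K x₀ = (n : ℝ) / ((n : ℝ) - 1) := by
    rw [hKeq x₀, hΔ0, zero_div, zero_add]
  have hKp₀ : K p₀ = 0 := by
    rw [hKdef]
    simp [hp₀]
  have hpos : (0 : ℝ) < (n : ℝ) / ((n : ℝ) - 1) := div_pos (by linarith) (by linarith)
  have hx₀ne : x₀ ≠ p₀ := by
    intro h
    rw [h] at hΔ0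
    simp only [hA, hB, eval_sub, eval_mul, eval_pow, eval_C, hp₀] at hΔ0
    have : (n : ℝ) * p.eval p₀ * (derivative (derivative p)).eval p₀ ≠ 0 :=
      mul_ne_zero (mul_ne_zero hnne (hp p₀)) (hp'' p₀)
    apply this
    linarith [hΔ0]
  have hKcont : Continuous K := by
    rw [hKdef]
    exact ((Polynomial.continuous (derivative p)).pow 2).div
      ((Polynomial.continuous (derivative (derivative p))).mul (Polynomial.continuous p))
      (fun x => mul_ne_zero (hp'' x) (hp x))
  -- limits of K at ±∞
  have htop : Filter.Tendsto K Filter.atTop (𝓝 (K x₀)) := by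
    have h0 := (Polynomial.div_tendsto_zero_of_degree_lt (A - B) D hdegΔ).add_const
      ((n : ℝ) / ((n : ℝ) - 1))
    rw [zero_add] at h0
    rw [hKx₀, funext hKeq]
    exact h0
  have hbot : Filter.Tendsto K Filter.atBot (𝓝 (K x₀)) := by
    have h0 := (div_tendsto_zero_atBot (A - B) D hdegΔ).add_const ((n : ℝ) / ((n : ℝ) - 1))
    rw [zero_add] at h0
    rw [hKx₀, funext hKeq]
    exact h0
  rcases lt_or_gt_of_ne hx₀ne with hlt | hgt
  · -- x₀ < p₀ : work with g y = K (-y)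
    set g : ℝ → ℝ := fun y => K (-y) with hg
    have hgcont : Continuous g := hKcont.comp continuous_neg
    have hgnoext : ∀ y : ℝ, -p₀ < y → ¬ IsLocalExtr g y := by
      intro y hy hex
      have h2 : IsLocalExtr (g ∘ fun z : ℝ => -z) (-y) := by
        refine IsLocalExtr.comp_continuous ?_ continuous_neg.continuousAt
        show IsLocalExtr g (-(-y))
        rw [neg_neg]
        exact hex
      have hgK : (g ∘ fun z : ℝ => -z) = K := funext fun z => by simp [hg]
      rw [hgK] at h2
      exact hnoext (-y) (by intro h; rw [← h] at hy; linarith) h2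
    have hinj : Set.InjOn g (Set.Ici (-p₀)) := inj_aux hgcont hgnoext
    have hgp₀ : g (-p₀) = 0 := by rw [hg]; simp [hKp₀]
    have hgx₀ : g (-x₀) = K x₀ := by rw [hg]; simp
    refine main_aux hgcont hinj (show -p₀ < -x₀ by linarith) ?_ ?_
    · rw [hgp₀, hgx₀, hKx₀]; exact hpos
    · rw [hgx₀]
      exact hbot.comp tendsto_neg_atTop_atBot
  · -- p₀ < x₀
    have hinj : Set.InjOn K (Set.Ici p₀) :=
      inj_aux hKcont (fun x hx => hnoext x (ne_of_gt hx))
    refine main_aux hKcont hinj hgt ?_ htop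
    rw [hKp₀, hKx₀]
    exact hpos
end

section
/- Let p be a real polynomial of even degree n ≥ 2 such that p has no real zeros, p'' has no real zeros, and p' has exactly one real zero p₀, which is simple. Let K(x) = p'(x)²/(p''(x)·p(x)). If K has a local extremum at some real point b ≠ p₀, then there exists a real point c at which K has a local maximum. -/
open Polynomial Filter Topology Set

/-- if the gain K has a local extremum at some b ≠ p₀,
then K has a local maximum at some real point. -/
theorem extremum_implies_local_max (p : Polynomial ℝ)
    (hdeg : 2 ≤ p.natDegree) (heven : Even p.natDegree)
    (hp : ∀ x : ℝ, p.eval x ≠ 0)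
    (hp'' : ∀ x : ℝ, (derivative (derivative p)).eval x ≠ 0)
    (p₀ : ℝ) (hp₀ : (derivative p).eval p₀ = 0)
    (huniq : ∀ x : ℝ, (derivative p).eval x = 0 → x = p₀)
    (hsimple : Polynomial.rootMultiplicity p₀ (derivative p) = 1)
    (b : ℝ) (hb : b ≠ p₀)
    (hext : IsLocalExtr (fun y : ℝ => ((derivative p).eval y) ^ 2 /
        (((derivative (derivative p)).eval y) * p.eval y)) b) :
    ∃ c : ℝ, IsLocalMax (fun y : ℝ => ((derivative p).eval y) ^ 2 /
        (((derivative (derivative p)).eval y) * p.eval y)) c := by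
  set f : ℝ → ℝ := fun y => ((derivative p).eval y) ^ 2 /
      (((derivative (derivative p)).eval y) * p.eval y) with hfdef
  have hD : ∀ x : ℝ, (derivative (derivative p)).eval x * p.eval x ≠ 0 :=
    fun x => mul_ne_zero (hp'' x) (hp x)
  have hcont : Continuous f := by
    apply Continuous.div
    · exact ((derivative p).continuous_aeval).pow 2
    · exact ((derivative (derivative p)).continuous_aeval).mul p.continuous_aeval
    · exact hD
  have hfp₀ : f p₀ = 0 := by simp [hfdef, hp₀]
  by_cases hpos : ∀ x : ℝ, 0 < (derivative (derivative p)).eval x * p.eval x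
  · -- denominator positive everywhere, so f ≥ 0 = f p₀
    have hfnn : ∀ x, 0 ≤ f x := fun x => div_nonneg (sq_nonneg _) (hpos x).le
    rcases hext with hmin | hmax
    · -- local min at b; work on the interval between b and p₀
      set a := min b p₀ with ha
      set d := max b p₀ with hd
      have had : a < d := min_lt_max.mpr hb
      have hbmem : b ∈ Icc a d := ⟨min_le_left _ _, le_max_left _ _⟩
      have hp₀mem : p₀ ∈ Icc a d := ⟨min_le_right _ _, le_max_right _ _⟩
      obtain ⟨c, hcmem, hcmax⟩ := (isCompact_Icc : IsCompact (Icc a d)).exists_isMaxOn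
        (nonempty_Icc.mpr had.le) hcont.continuousOn
      by_cases hcI : c ∈ Ioo a d
      · exact ⟨c, hcmax.isLocalMax (Icc_mem_nhds hcI.1 hcI.2)⟩
      · have hcend : c = a ∨ c = d := by
          rcases hcmem with ⟨h1, h2⟩
          rcases h1.eq_or_lt with h | h
          · exact Or.inl h.symm
          rcases h2.eq_or_lt with h' | h'
          · exact Or.inr h'
          exact absurd ⟨h, h'⟩ hcI
        have hcbp : c = b ∨ c = p₀ := by
          rcases le_total b p₀ with hle | hle
          · rw [ha, hd, min_eq_left hle, max_eq_right hle] at hcend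
            exact hcend
          · rw [ha, hd, min_eq_right hle, max_eq_left hle] at hcend
            exact hcend.symm
        rcases hcbp with h | h
        · -- max on interval attained at b; combine with local min at b
          have hbcl : b ∈ closure (Ioo a d) := by
            rw [closure_Ioo had.ne]; exact hbmem
          obtain ⟨x, hx1, hx2⟩ := mem_closure_iff_nhds.mp hbcl _ hmin
          rw [h] at hcmax
          have hxmax : IsMaxOn f (Icc a d) x := by
            intro y hy
            have h1 : f y ≤ f b := hcmax hy
            have h2 : f b ≤ f x := hx1
            exact le_trans h1 h2
          exact ⟨x, hxmax.isLocalMax (Icc_mem_nhds hx2.1 hx2.2)⟩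
        · -- max on interval attained at p₀, where f = 0; then f b = 0, contradiction
          exfalso
          have hfb0 : f b = 0 := le_antisymm
            (by have := hcmax hbmem; rw [h, hfp₀] at this; exact this) (hfnn b)
          have : (derivative p).eval b = 0 := by
            have := (div_eq_zero_iff.mp hfb0).resolve_right (hD b)
            exact pow_eq_zero_iff (n := 2) (by norm_num) |>.mp this
          exact hb (huniq b this)
    · exact ⟨b, hmax⟩
  · -- denominator negative everywhere (IVT), so f ≤ 0 = f p₀: global max at p₀
    push_neg at hpos
    obtain ⟨x₀, hx₀⟩ := hpos
    have hx₀' : (derivative (derivative p)).eval x₀ * p.eval x₀ < 0 :=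
      lt_of_le_of_ne hx₀ (hD x₀)
    have hDcont : Continuous fun x : ℝ =>
        (derivative (derivative p)).eval x * p.eval x :=
      ((derivative (derivative p)).continuous_aeval).mul p.continuous_aeval
    have hneg : ∀ x, (derivative (derivative p)).eval x * p.eval x < 0 := by
      intro x
      by_contra h
      push_neg at h
      have h' : 0 < (derivative (derivative p)).eval x * p.eval x :=
        lt_of_le_of_ne h (Ne.symm (hD x))
      have h0 : (0 : ℝ) ∈ Set.range fun x : ℝ =>
          (derivative (derivative p)).eval x * p.eval x :=
        intermediate_value_univ x₀ x hDcont ⟨hx₀'.le, h'.le⟩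
      obtain ⟨y, hy⟩ := h0
      exact hD y hy
    refine ⟨p₀, ?_⟩
    have : ∀ x, f x ≤ f p₀ := by
      intro x
      rw [hfp₀]
      exact div_nonpos_iff.mpr (Or.inl ⟨sq_nonneg _, (hneg x).le⟩)
    exact Filter.Eventually.of_forall this
end

section
/- Let p be a real polynomial of even degree n ≥ 2 such that p has no real zeros, p'' has no real zeros, and p' has exactly one real zero p₀, which is simple. Let K(x) = p'(x)²/(p''(x)·p(x)). Suppose K has a local extremum at some real point other than p₀, and every real point b at which K has a local maximum satisfies K(b) < n/(n−1). Then the polynomial Δ(x) = (n−1)·p'(x)² − n·p(x)·p''(x) has no real zeros. -/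
open Polynomial Filter Topology

/-!
The numerator `p'²` and denominator `p''·p` of the gain `K` have the same degree `2n - 2`, with
leading coefficients `n²a²` and `n(n-1)a²`, so the continuous function `K` tends to `n/(n-1)` at
both ends of `ℝ`. A real zero of `Δ` is a point where `K = n/(n-1)`; then `K` attains a global
maximum of value at least `n/(n-1)`, which is a local maximum contradicting the hypothesis.
-/

theorem Continuous.exists_forall_ge_of_tendsto_cocompact {β α : Type*} [TopologicalSpace β]
    [LinearOrder α] [TopologicalSpace α] [OrderTopology α] {f : β → α} (hf : Continuous f)
    {L : α} (hL : Tendsto f (cocompact β) (𝓝 L)) {x₀ : β} (hx₀ : L ≤ f x₀) :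
    ∃ b, (∀ y, f y ≤ f b) ∧ L ≤ f b := by
  by_cases hbelow : ∀ y, f y ≤ L
  · exact ⟨x₀, fun y => (hbelow y).trans hx₀, hx₀⟩
  obtain ⟨y, hy⟩ : ∃ y, L < f y := by simpa using hbelow
  obtain ⟨b, hb⟩ := hf.exists_forall_ge' y ((hL.eventually_lt_const hy).mono fun _ => le_of_lt)
  exact ⟨b, hb, hy.le.trans (hb y)⟩

namespace Polynomial

theorem div_tendsto_cocompact_leadingCoeff_div_of_degree_eq (P Q : ℝ[X])
    (hdeg : P.degree = Q.degree) :
    Tendsto (fun x => eval x P / eval x Q) (cocompact ℝ) (𝓝 (P.leadingCoeff / Q.leadingCoeff)) := by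
  rw [cocompact_eq_atBot_atTop]
  exact (div_tendsto_atBot_leadingCoeff_div_of_degree_eq P Q hdeg).sup
    (div_tendsto_atTop_leadingCoeff_div_of_degree_eq P Q hdeg)

section Gain

variable {K : Type*} [Field K] [CharZero K] {p : K[X]}

theorem degree_derivative_sq_eq_degree_derivative_derivative_mul (hp : 2 ≤ p.natDegree) :
    (derivative p ^ 2).degree = (derivative (derivative p) * p).degree := by
  have hp₁ : derivative p ≠ 0 := derivative_ne_zero.mpr (by omega)
  have hp₂ : derivative (derivative p) ≠ 0 := derivative_ne_zero.mpr (by rw [natDegree_derivative]; omega)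
  have hp₀ : p ≠ 0 := by rintro rfl; simp at hp
  rw [degree_eq_natDegree (pow_ne_zero 2 hp₁), degree_eq_natDegree (mul_ne_zero hp₂ hp₀),
    natDegree_pow, natDegree_mul hp₂ hp₀]
  simp only [natDegree_derivative]
  norm_cast
  omega

theorem leadingCoeff_derivative_sq_div_leadingCoeff_derivative_derivative_mul
    (hp : 2 ≤ p.natDegree) :
    (derivative p ^ 2).leadingCoeff / (derivative (derivative p) * p).leadingCoeff =
      p.natDegree / (p.natDegree - 1) := by
  have hp₀ : p.leadingCoeff ≠ 0 := leadingCoeff_ne_zero.mpr (by rintro rfl; simp at hp)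
  have hn : (p.natDegree : K) ≠ 0 := by norm_cast; omega
  have hn₁ : (p.natDegree : K) - 1 ≠ 0 := by
    rw [sub_ne_zero]; norm_cast; omega
  rw [leadingCoeff_pow, leadingCoeff_mul, leadingCoeff_derivative, leadingCoeff_derivative,
    leadingCoeff_derivative, natDegree_derivative, Nat.cast_pred (by omega)]
  field_simp

end Gain

end Polynomial

theorem small_maxima_no_real_zero_general (p : Polynomial ℝ)
    (hdeg : 2 ≤ p.natDegree)
    (hp : ∀ x : ℝ, p.eval x ≠ 0)
    (hp'' : ∀ x : ℝ, (derivative (derivative p)).eval x ≠ 0)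
    (hmax : ∀ b : ℝ,
      IsLocalMax (fun y : ℝ => ((derivative p).eval y) ^ 2 /
        (((derivative (derivative p)).eval y) * p.eval y)) b →
      ((derivative p).eval b) ^ 2 / (((derivative (derivative p)).eval b) * p.eval b) <
        (p.natDegree : ℝ) / ((p.natDegree : ℝ) - 1)) :
    ∀ x : ℝ,
      (Polynomial.C ((p.natDegree : ℝ) - 1) * (derivative p) ^ 2 -
        Polynomial.C (p.natDegree : ℝ) * p * derivative (derivative p)).eval x ≠ 0 := by
  intro x hx
  set gain : ℝ → ℝ := fun y => ((derivative p).eval y) ^ 2 /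
    (((derivative (derivative p)).eval y) * p.eval y)
  have hn₁ : (p.natDegree : ℝ) - 1 ≠ 0 := by
    rw [sub_ne_zero]; norm_cast; omega
  have hcont : Continuous gain :=
    Continuous.div (by fun_prop) (by fun_prop) fun y => mul_ne_zero (hp'' y) (hp y)
  have hlim : Tendsto gain (cocompact ℝ) (𝓝 (p.natDegree / (p.natDegree - 1))) := by
    have := div_tendsto_cocompact_leadingCoeff_div_of_degree_eq _ _
      (degree_derivative_sq_eq_degree_derivative_derivative_mul hdeg)
    simpa only [leadingCoeff_derivative_sq_div_leadingCoeff_derivative_derivative_mul hdeg,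
      eval_pow, eval_mul] using this
  have hgain_x : gain x = p.natDegree / (p.natDegree - 1) := by
    simp only [eval_sub, eval_mul, eval_pow, eval_C] at hx
    rw [div_eq_div_iff (mul_ne_zero (hp'' x) (hp x)) hn₁]
    linear_combination hx
  obtain ⟨b, hb, hgain_b⟩ := hcont.exists_forall_ge_of_tendsto_cocompact hlim hgain_x.ge
  exact (hmax b (.of_forall hb)).not_ge hgain_b

/-- if the gain K has a local extremum away from p₀ and every local
maximum value of K is less than n/(n−1), then Δ has no real zeros. -/
theorem small_maxima_no_real_zero (p : Polynomial ℝ)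
    (hdeg : 2 ≤ p.natDegree) (heven : Even p.natDegree)
    (hp : ∀ x : ℝ, p.eval x ≠ 0)
    (hp'' : ∀ x : ℝ, (derivative (derivative p)).eval x ≠ 0)
    (p₀ : ℝ) (hp₀ : (derivative p).eval p₀ = 0)
    (huniq : ∀ x : ℝ, (derivative p).eval x = 0 → x = p₀)
    (hsimple : Polynomial.rootMultiplicity p₀ (derivative p) = 1)
    (hext : ∃ b : ℝ, b ≠ p₀ ∧
      IsLocalExtr (fun y : ℝ => ((derivative p).eval y) ^ 2 /
        (((derivative (derivative p)).eval y) * p.eval y)) b)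
    (hmax : ∀ b : ℝ,
      IsLocalMax (fun y : ℝ => ((derivative p).eval y) ^ 2 /
        (((derivative (derivative p)).eval y) * p.eval y)) b →
      ((derivative p).eval b) ^ 2 / (((derivative (derivative p)).eval b) * p.eval b) <
        (p.natDegree : ℝ) / ((p.natDegree : ℝ) - 1)) :
    ∀ x : ℝ,
      (Polynomial.C ((p.natDegree : ℝ) - 1) * (derivative p) ^ 2 -
        Polynomial.C (p.natDegree : ℝ) * p * derivative (derivative p)).eval x ≠ 0 :=
  small_maxima_no_real_zero_general p hdeg hp hp'' hmax
end

section
/- Let p be a real polynomial of even degree n ≥ 2 such that p has no real zeros, p'' has no real zeros, and p' has exactly one real zero p₀, which is simple. Let K(x) = p'(x)²/(p''(x)·p(x)). If there exists a real point b at which K has a local maximum and K(b) ≥ n/(n−1), then the polynomial Δ(x) = (n−1)·p'(x)² − n·p(x)·p''(x) has at least one real zero. -/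
open Polynomial

open Filter in
/-- Auxiliary: under the hypotheses, p·p'' is everywhere positive. -/
theorem pos_prod_aux (p : Polynomial ℝ) (hdeg : 2 ≤ p.natDegree)
    (hp : ∀ x : ℝ, p.eval x ≠ 0)
    (hp'' : ∀ x : ℝ, (derivative (derivative p)).eval x ≠ 0) :
    ∀ x : ℝ, 0 < p.eval x * (derivative (derivative p)).eval x := by
  set q := p * derivative (derivative p) with hqdef
  have hpne : p ≠ 0 := fun h => hp 0 (by simp [h])
  have hp''ne : derivative (derivative p) ≠ 0 := fun h => hp'' 0 (by simp [h])
  have hq0 : ∀ x : ℝ, q.eval x ≠ 0 := fun x => by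
    simp only [hqdef, eval_mul]; exact mul_ne_zero (hp x) (hp'' x)
  have hnd1 : (derivative p).natDegree = p.natDegree - 1 :=
    natDegree_eq_of_degree_eq_some (degree_derivative_eq p (by omega))
  have hnd2 : (derivative (derivative p)).natDegree = p.natDegree - 2 := by
    have h2 := natDegree_eq_of_degree_eq_some
      (degree_derivative_eq (derivative p) (by omega))
    omega
  have hlc1 : (derivative p).leadingCoeff = p.leadingCoeff * (p.natDegree : ℝ) := by
    rw [leadingCoeff, hnd1, coeff_derivative,
      show p.natDegree - 1 + 1 = p.natDegree from by omega, leadingCoeff]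
    push_cast [Nat.cast_sub (show 1 ≤ p.natDegree by omega)]
    ring
  have hlc2 : (derivative (derivative p)).leadingCoeff
      = (derivative p).leadingCoeff * ((p.natDegree : ℝ) - 1) := by
    rw [leadingCoeff, hnd2, coeff_derivative,
      show p.natDegree - 2 + 1 = p.natDegree - 1 from by omega, leadingCoeff, hnd1]
    push_cast [Nat.cast_sub (show 2 ≤ p.natDegree from hdeg)]
    ring
  have hlcq : 0 < q.leadingCoeff := by
    rw [hqdef, leadingCoeff_mul, hlc2, hlc1]
    have hlp : 0 < p.leadingCoeff * p.leadingCoeff :=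
      mul_self_pos.mpr (leadingCoeff_ne_zero.mpr hpne)
    have h1 : (0:ℝ) < (p.natDegree : ℝ) := by positivity
    have h2 : (0:ℝ) < (p.natDegree : ℝ) - 1 := by
      have : (2:ℝ) ≤ (p.natDegree : ℝ) := by exact_mod_cast hdeg
      linarith
    nlinarith [mul_pos (mul_pos hlp h1) h2]
  have hqdeg : 0 < q.degree := by
    rw [hqdef]
    have : (p * derivative (derivative p)).natDegree
        = p.natDegree + (derivative (derivative p)).natDegree :=
      natDegree_mul hpne hp''ne
    have hne : p * derivative (derivative p) ≠ 0 := mul_ne_zero hpne hp''ne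
    rw [degree_eq_natDegree hne, this]
    exact_mod_cast by omega
  have htop : Tendsto (fun x => q.eval x) atTop atTop :=
    q.tendsto_atTop_of_leadingCoeff_nonneg hqdeg hlcq.le
  obtain ⟨c, hc⟩ := (htop.eventually_gt_atTop 0).exists
  intro x
  rcases lt_or_gt_of_ne (hq0 x) with hneg | hpos
  · exfalso
    have hcont : ContinuousOn (fun y => q.eval y) (Set.uIcc x c) :=
      (q.continuous_aeval).continuousOn
    have h0 : (0:ℝ) ∈ Set.uIcc (q.eval x) (q.eval c) :=
      Set.mem_uIcc.mpr (Or.inl ⟨hneg.le, hc.le⟩)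
    obtain ⟨y, _, hy⟩ := intermediate_value_uIcc hcont h0
    exact hq0 y hy
  · simpa [hqdef] using hpos

/-- if the gain K has a local maximum point b with K(b) ≥ n/(n−1),
then Δ has at least one real zero. -/
theorem big_maximum_gives_real_zero (p : Polynomial ℝ)
    (hdeg : 2 ≤ p.natDegree) (heven : Even p.natDegree)
    (hp : ∀ x : ℝ, p.eval x ≠ 0)
    (hp'' : ∀ x : ℝ, (derivative (derivative p)).eval x ≠ 0)
    (p₀ : ℝ) (hp₀ : (derivative p).eval p₀ = 0)
    (huniq : ∀ x : ℝ, (derivative p).eval x = 0 → x = p₀)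
    (hsimple : Polynomial.rootMultiplicity p₀ (derivative p) = 1)
    (b : ℝ)
    (hmax : IsLocalMax (fun y : ℝ => ((derivative p).eval y) ^ 2 /
        (((derivative (derivative p)).eval y) * p.eval y)) b)
    (hge : (p.natDegree : ℝ) / ((p.natDegree : ℝ) - 1) ≤
      ((derivative p).eval b) ^ 2 / (((derivative (derivative p)).eval b) * p.eval b)) :
    ∃ x : ℝ,
      (Polynomial.C ((p.natDegree : ℝ) - 1) * (derivative p) ^ 2 -
        Polynomial.C (p.natDegree : ℝ) * p * derivative (derivative p)).eval x = 0 := by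
  have hpos := pos_prod_aux p hdeg hp hp''
  set n : ℝ := (p.natDegree : ℝ) with hn
  have hn2 : (2:ℝ) ≤ n := by rw [hn]; exact_mod_cast hdeg
  have hn1 : (0:ℝ) < n - 1 := by linarith
  set Δ := Polynomial.C (n - 1) * (derivative p) ^ 2 -
      Polynomial.C n * p * derivative (derivative p) with hΔ
  have hΔeval : ∀ x : ℝ, Δ.eval x
      = (n - 1) * ((derivative p).eval x) ^ 2
        - n * (p.eval x * (derivative (derivative p)).eval x) := by
    intro x; simp [hΔ]; ring
  have hΔp₀ : Δ.eval p₀ < 0 := by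
    rw [hΔeval, hp₀]
    have := hpos p₀
    nlinarith
  have hΔb : 0 ≤ Δ.eval b := by
    rw [hΔeval]
    have hD : 0 < (derivative (derivative p)).eval b * p.eval b := by
      linarith [hpos b]
    have := (div_le_div_iff₀ hn1 hD).mp hge
    nlinarith
  have hcont : ContinuousOn (fun y => Δ.eval y) (Set.uIcc p₀ b) :=
    Δ.continuous_aeval.continuousOn
  have h0 : (0:ℝ) ∈ Set.uIcc (Δ.eval p₀) (Δ.eval b) :=
    Set.mem_uIcc.mpr (Or.inl ⟨hΔp₀.le, hΔb⟩)
  obtain ⟨y, _, hy⟩ := intermediate_value_uIcc hcont h0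
  exact ⟨y, hy⟩
end

section
/- Let p be a real polynomial of even degree n ≥ 2 such that p has no real zeros and p' has exactly one real zero p₀, which is simple. Suppose p'' has at least one real zero and every real zero of p'' is strictly less than p₀, and let z₃ be the largest real zero of p''. Then the polynomial Δ(x) = (n−1)·p'(x)² − n·p(x)·p''(x) has a zero in the open interval (z₃, p₀); in particular Δ has at least one real zero. -/
open Polynomial

/-- If p' vanishes only at p₀, p''(p₀) > 0, and p(p₀) < 0, then p has a real zero. -/
lemma helper_zero_in_left (p : Polynomial ℝ) (hdeg : 1 ≤ p.natDegree) (p₀ : ℝ)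
    (hp₀ : (derivative p).eval p₀ = 0)
    (huniq : ∀ x : ℝ, (derivative p).eval x = 0 → x = p₀)
    (hr : 0 < (derivative (derivative p)).eval p₀)
    (hneg : p.eval p₀ < 0) : ∃ x, p.eval x = 0 := by
  set q := derivative p with hq
  have hder : HasDerivAt (fun x => q.eval x) ((derivative q).eval p₀) p₀ := q.hasDerivAt p₀
  have hslope := hasDerivAt_iff_tendsto_slope.mp hder
  have hev : ∀ᶠ y in nhdsWithin p₀ {p₀}ᶜ, 0 < slope (fun x => q.eval x) p₀ y :=
    hslope.eventually (eventually_gt_nhds hr)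
  have hle : nhdsWithin p₀ (Set.Ioi p₀) ≤ nhdsWithin p₀ {p₀}ᶜ :=
    nhdsWithin_mono p₀ (fun x hx => ne_of_gt hx)
  obtain ⟨y, hy1, hy2⟩ := ((hev.filter_mono hle).and (eventually_mem_nhdsWithin)).exists
  rw [slope_def_field, hp₀, sub_zero] at hy1
  have hy2' : p₀ < y := hy2
  have hqy : 0 < q.eval y := by
    have := mul_pos hy1 (sub_pos.2 hy2')
    rwa [div_mul_cancel₀ _ (ne_of_gt (sub_pos.2 hy2'))] at this
  have hqpos : ∀ x, p₀ < x → 0 < q.eval x := by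
    intro x hx
    rcases lt_trichotomy (q.eval x) 0 with h | h | h
    · exfalso
      rcases lt_trichotomy x y with hxy | hxy | hxy
      · obtain ⟨c, hc, hc0⟩ := intermediate_value_Ioo (le_of_lt hxy)
          (q.continuous.continuousOn) (Set.mem_Ioo.2 ⟨h, hqy⟩)
        exact absurd (huniq c hc0) (ne_of_gt (lt_trans hx hc.1))
      · exact absurd (hxy ▸ h) (not_lt.2 (le_of_lt hqy))
      · obtain ⟨c, hc, hc0⟩ := intermediate_value_Ioo' (le_of_lt hxy)
          (q.continuous.continuousOn) (Set.mem_Ioo.2 ⟨h, hqy⟩)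
        exact absurd (huniq c hc0) (ne_of_gt (lt_trans hy2' hc.1))
    · exact absurd (huniq x h) (ne_of_gt hx)
    · exact h
  have hmono : StrictMonoOn (fun x => p.eval x) (Set.Ici p₀) := by
    apply strictMonoOn_of_deriv_pos (convex_Ici p₀) p.continuous.continuousOn
    intro x hx
    rw [interior_Ici] at hx
    rw [Polynomial.deriv]
    exact hqpos x hx
  have hdeg' : 0 < p.degree := natDegree_pos_iff_degree_pos.mp (by omega)
  have htend := Polynomial.abs_tendsto_atTop p hdeg'
  obtain ⟨x, hx1, hx2⟩ := ((htend.eventually_gt_atTop |p.eval p₀|).and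
    (Filter.eventually_gt_atTop p₀)).exists
  have hpx : 0 < p.eval x := by
    have hge : p.eval p₀ ≤ p.eval x :=
      le_of_lt (hmono (Set.self_mem_Ici) (Set.mem_Ici.2 (le_of_lt hx2)) hx2)
    by_contra h
    push_neg at h
    have : |p.eval x| ≤ |p.eval p₀| := by
      rw [abs_of_nonpos h, abs_of_neg hneg]
      linarith
    linarith
  obtain ⟨c, _, hc⟩ := intermediate_value_Icc (le_of_lt hx2) p.continuous.continuousOn
    (Set.mem_Icc.2 ⟨le_of_lt hneg, le_of_lt hpx⟩)
  exact ⟨c, hc⟩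

/-- if all real zeros of p'' lie strictly to the left of p₀ and z₃ is the
largest one, then Δ has a zero in (z₃, p₀). -/
theorem zero_in_left_interval (p : Polynomial ℝ)
    (hdeg : 2 ≤ p.natDegree) (heven : Even p.natDegree)
    (hp : ∀ x : ℝ, p.eval x ≠ 0)
    (p₀ : ℝ) (hp₀ : (derivative p).eval p₀ = 0)
    (huniq : ∀ x : ℝ, (derivative p).eval x = 0 → x = p₀)
    (hsimple : Polynomial.rootMultiplicity p₀ (derivative p) = 1)
    (hleft : ∀ z : ℝ, (derivative (derivative p)).eval z = 0 → z < p₀)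
    (z₃ : ℝ) (hz₃ : (derivative (derivative p)).eval z₃ = 0)
    (hlargest : ∀ z : ℝ, (derivative (derivative p)).eval z = 0 → z ≤ z₃) :
    ∃ x ∈ Set.Ioo z₃ p₀,
      (Polynomial.C ((p.natDegree : ℝ) - 1) * (derivative p) ^ 2 -
        Polynomial.C (p.natDegree : ℝ) * p * derivative (derivative p)).eval x = 0 := by
  set r := derivative (derivative p) with hrdef
  have hrp₀ : r.eval p₀ ≠ 0 := fun h => lt_irrefl p₀ (hleft p₀ h)
  have hpp₀ : p.eval p₀ ≠ 0 := hp p₀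
  have hdeg1 : 1 ≤ p.natDegree := by omega
  -- key sign fact : p(p₀) * p''(p₀) > 0
  have key : 0 < p.eval p₀ * r.eval p₀ := by
    rcases hrp₀.lt_or_gt with hneg | hpos
    · rcases hpp₀.lt_or_gt with h1 | h1
      · exact mul_pos_of_neg_of_neg h1 hneg
      · exfalso
        have hd : (derivative (-p)) = -derivative p := by simp
        have hdd : (derivative (derivative (-p))) = -r := by simp [hrdef]
        obtain ⟨x, hx⟩ := helper_zero_in_left (-p)
          (by rwa [natDegree_neg]) p₀
          (by rw [hd]; simp [hp₀])
          (fun x hx => huniq x (by simpa [hd] using hx))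
          (by rw [hdd]; simp; linarith)
          (by simp; linarith)
        simp at hx
        exact hp x hx
    · rcases hpp₀.lt_or_gt with h1 | h1
      · exfalso
        obtain ⟨x, hx⟩ := helper_zero_in_left p hdeg1 p₀ hp₀ huniq hpos h1
        exact hp x hx
      · exact mul_pos h1 hpos
  have hz₃p₀ : z₃ < p₀ := hleft z₃ hz₃
  have hq3 : (derivative p).eval z₃ ≠ 0 := by
    intro h
    exact absurd (huniq z₃ h) (ne_of_lt hz₃p₀)
  set Δ := Polynomial.C ((p.natDegree : ℝ) - 1) * (derivative p) ^ 2 -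
      Polynomial.C (p.natDegree : ℝ) * p * r with hΔdef
  have hn1 : (1 : ℝ) ≤ (p.natDegree : ℝ) - 1 := by
    have : (2 : ℝ) ≤ (p.natDegree : ℝ) := by exact_mod_cast hdeg
    linarith
  have hΔz₃ : 0 < Δ.eval z₃ := by
    have : Δ.eval z₃ = ((p.natDegree : ℝ) - 1) * ((derivative p).eval z₃) ^ 2 := by
      simp [hΔdef, hz₃]
    rw [this]
    exact mul_pos (by linarith) (pow_two_pos_of_ne_zero hq3)
  have hΔp₀ : Δ.eval p₀ < 0 := by
    have : Δ.eval p₀ = -((p.natDegree : ℝ) * (p.eval p₀ * r.eval p₀)) := by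
      simp [hΔdef, hp₀]; ring
    rw [this]
    have hn : (0 : ℝ) < (p.natDegree : ℝ) := by positivity
    nlinarith
  obtain ⟨x, hx, hfx⟩ := intermediate_value_Ioo' (le_of_lt hz₃p₀)
    (Δ.continuous.continuousOn) (Set.mem_Ioo.2 ⟨hΔp₀, hΔz₃⟩)
  exact ⟨x, hx, hfx⟩
end

section
/- Let p be a real polynomial of even degree n ≥ 2 such that p has no real zeros and p' has exactly one real zero p₀, which is simple. Suppose p'' has at least one real zero in (p₀, +∞), and let z_m be the largest real zero of p''. Let K(x) = p'(x)²/(p''(x)·p(x)) on (z_m, +∞) (note p(x)·p''(x) > 0 there). If either K has no local extremum at any point of (z_m, +∞), or every point b ∈ (z_m, +∞) at which K has a local minimum satisfies K(b) > n/(n−1), then the polynomial Δ(x) = (n−1)·p'(x)² − n·p(x)·p''(x) has no zeros in (z_m, +∞). -/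
/-!
On `(z_m, ∞)` the polynomial `p * p''` has no zeros and a positive leading coefficient, so it is
positive there and the gain `K = p'² / (p'' p)` is continuous. Since `p'(z_m) ≠ 0` and
`p''(z_m) = 0`, `K → +∞` at `z_m⁺`, while comparing leading coefficients gives `K → n/(n-1)` at
`+∞`. If `K` dipped below `n/(n-1)`, it would attain an interior minimum below that value; if it
touched `n/(n-1)` without dipping below, that point would be a local minimum with value
`n/(n-1)`. Both are excluded, and `Δ(x) = 0` is equivalent to `K(x) = n/(n-1)`.
-/

open Polynomial Filter Set Topology

theorem exists_isLocalMin_le_of_tendsto {f : ℝ → ℝ} {a L d : ℝ} (hf : ContinuousOn f (Ioi a))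
    (ha : Tendsto f (𝓝[>] a) atTop) (hL : Tendsto f atTop (𝓝 L)) (hd : a < d) (hfd : f d < L) :
    ∃ b, a < b ∧ IsLocalMin f b ∧ f b ≤ f d := by
  obtain ⟨a', ha'f, ha'd, haa'⟩ : ∃ a', f d < f a' ∧ a' < d ∧ a < a' :=
    ((ha.eventually_gt_atTop (f d)).and ((eventually_nhdsWithin_of_eventually_nhds
      (eventually_lt_nhds hd)).and self_mem_nhdsWithin)).exists
  obtain ⟨B, hBf, hdB⟩ : ∃ B, f d < f B ∧ d < B :=
    ((hL.eventually (eventually_gt_nhds hfd)).and (eventually_gt_atTop d)).exists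
  have hsub : Icc a' B ⊆ Ioi a := fun y hy => haa'.trans_le hy.1
  have hdmem : d ∈ Icc a' B := ⟨ha'd.le, hdB.le⟩
  obtain ⟨b, hb, hbmin⟩ := isCompact_Icc.exists_isMinOn ⟨d, hdmem⟩ (hf.mono hsub)
  have hbd : f b ≤ f d := hbmin hdmem
  have ha'b : a' < b := hb.1.lt_of_ne (by rintro rfl; linarith)
  have hbB : b < B := hb.2.lt_of_ne (by rintro rfl; linarith)
  exact ⟨b, hsub hb, hbmin.isLocalMin (Icc_mem_nhds ha'b hbB), hbd⟩

theorem ne_of_forall_isLocalMin_lt {f : ℝ → ℝ} {a L : ℝ} (hf : ContinuousOn f (Ioi a))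
    (ha : Tendsto f (𝓝[>] a) atTop) (hL : Tendsto f atTop (𝓝 L))
    (hmin : ∀ b ∈ Ioi a, IsLocalMin f b → L < f b) : ∀ x ∈ Ioi a, f x ≠ L := by
  intro x hx hfx
  by_cases hlow : ∃ d ∈ Ioi a, f d < L
  · obtain ⟨d, hd, hfd⟩ := hlow
    obtain ⟨b, hb, hbmin, hbd⟩ := exists_isLocalMin_le_of_tendsto hf ha hL hd hfd
    linarith [hmin b hb hbmin]
  · push Not at hlow
    have hxmin : IsLocalMin f x := by
      filter_upwards [Ioi_mem_nhds hx] with y hy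
      exact hfx ▸ hlow y hy
    exact (hmin x hx hxmin).ne' hfx

namespace Polynomial

theorem eval_pos_of_forall_ne_zero_Ioi {q : ℝ[X]} {a : ℝ} (hdeg : 0 < q.degree)
    (hlc : 0 < q.leadingCoeff) (hq : ∀ x ∈ Ioi a, q.eval x ≠ 0) : ∀ x ∈ Ioi a, 0 < q.eval x := by
  intro x hx
  by_contra! hle
  obtain ⟨X, hX, hxX⟩ : ∃ X, 0 < q.eval X ∧ x < X :=
    (((q.tendsto_atTop_of_leadingCoeff_nonneg hdeg hlc.le).eventually_gt_atTop 0).and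
      (eventually_gt_atTop x)).exists
  obtain ⟨z, hz, hqz⟩ := intermediate_value_Ioo hxX.le q.continuous.continuousOn
    ⟨(hle.lt_of_ne (hq x hx)), hX⟩
  exact hq z (lt_trans hx hz.1) hqz

theorem leadingCoeff_derivative_derivative (p : ℝ[X]) :
    (derivative (derivative p)).leadingCoeff =
      p.leadingCoeff * p.natDegree * (p.natDegree - 1 : ℝ) := by
  rw [leadingCoeff_derivative, leadingCoeff_derivative, natDegree_derivative]
  rcases Nat.eq_zero_or_pos p.natDegree with h | h
  · simp [h]
  · rw [Nat.cast_sub h, Nat.cast_one]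

theorem eval_derivative_derivative_mul_pos {p : ℝ[X]} {a : ℝ} (hp : 2 ≤ p.natDegree)
    (hroots : ∀ x ∈ Ioi a, (derivative (derivative p)).eval x * p.eval x ≠ 0) :
    ∀ x ∈ Ioi a, 0 < (derivative (derivative p)).eval x * p.eval x := by
  have hp0 : p ≠ 0 := by rintro rfl; simp at hp
  have hp''0 : derivative (derivative p) ≠ 0 := by
    rw [derivative_ne_zero, natDegree_derivative]; omega
  have hn : (1 : ℝ) < p.natDegree := by exact_mod_cast hp
  simp_rw [← eval_mul] at hroots ⊢
  refine eval_pos_of_forall_ne_zero_Ioi ?_ ?_ hroots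
  · rw [← natDegree_pos_iff_degree_pos, natDegree_mul hp''0 hp0]; omega
  · rw [leadingCoeff_mul, leadingCoeff_derivative_derivative,
      show ∀ c n : ℝ, c * n * (n - 1) * c = c ^ 2 * (n * (n - 1)) by intros; ring]
    have ha : p.leadingCoeff ≠ 0 := leadingCoeff_ne_zero.2 hp0
    have hn1 : 0 < (p.natDegree - 1 : ℝ) := by linarith
    positivity

noncomputable def gain (p : ℝ[X]) (x : ℝ) : ℝ :=
  (derivative p).eval x ^ 2 / ((derivative (derivative p)).eval x * p.eval x)

theorem continuousOn_gain {p : ℝ[X]} {s : Set ℝ}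
    (hs : ∀ x ∈ s, (derivative (derivative p)).eval x * p.eval x ≠ 0) :
    ContinuousOn (gain p) s :=
  ((derivative p).continuous.pow 2).continuousOn.div
    ((derivative (derivative p)).continuous.mul p.continuous).continuousOn hs

theorem tendsto_gain_atTop {p : ℝ[X]} (hp : 2 ≤ p.natDegree) :
    Tendsto (gain p) atTop (𝓝 (p.natDegree / (p.natDegree - 1 : ℝ))) := by
  have hp0 : p ≠ 0 := by rintro rfl; simp at hp
  have hp'0 : derivative p ≠ 0 := by rw [derivative_ne_zero]; omega
  have hp''0 : derivative (derivative p) ≠ 0 := by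
    rw [derivative_ne_zero, natDegree_derivative]; omega
  have hdeg : (derivative p ^ 2).degree = (derivative (derivative p) * p).degree := by
    rw [degree_eq_natDegree (pow_ne_zero 2 hp'0), degree_eq_natDegree (mul_ne_zero hp''0 hp0),
      natDegree_pow, natDegree_mul hp''0 hp0]
    simp only [natDegree_derivative]
    congr 1; omega
  have hlc : (derivative p ^ 2).leadingCoeff / (derivative (derivative p) * p).leadingCoeff =
      p.natDegree / (p.natDegree - 1 : ℝ) := by
    have ha : p.leadingCoeff ≠ 0 := leadingCoeff_ne_zero.2 hp0
    have hn : (p.natDegree : ℝ) ≠ 0 := by positivity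
    have hn1 : (p.natDegree - 1 : ℝ) ≠ 0 := by
      have : (2 : ℝ) ≤ p.natDegree := by exact_mod_cast hp
      linarith
    rw [leadingCoeff_pow, leadingCoeff_derivative, leadingCoeff_mul,
      leadingCoeff_derivative_derivative]
    field_simp
  have := div_tendsto_atTop_leadingCoeff_div_of_degree_eq _ _ hdeg
  simp only [hlc, eval_pow, eval_mul] at this
  exact this

theorem tendsto_gain_nhdsGT {p : ℝ[X]} {a : ℝ} (h'' : (derivative (derivative p)).eval a = 0)
    (h' : (derivative p).eval a ≠ 0)
    (hpos : ∀ᶠ x in 𝓝[>] a, 0 < (derivative (derivative p)).eval x * p.eval x) :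
    Tendsto (gain p) (𝓝[>] a) atTop := by
  have hnum : Tendsto (fun x => (derivative p).eval x ^ 2) (𝓝[>] a)
      (𝓝 ((derivative p).eval a ^ 2)) :=
    ((derivative p).continuous.pow 2).continuousAt.tendsto.mono_left nhdsWithin_le_nhds
  have hden : Tendsto (fun x => (derivative (derivative p)).eval x * p.eval x) (𝓝[>] a)
      (𝓝[>] 0) := by
    refine tendsto_nhdsWithin_iff.2 ⟨?_, hpos⟩
    have : Tendsto (fun x => (derivative (derivative p)).eval x * p.eval x) (𝓝 a)
        (𝓝 ((derivative (derivative p)).eval a * p.eval a)) :=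
      ((derivative (derivative p)).continuous.mul p.continuous).tendsto a
    rw [h'', zero_mul] at this
    exact this.mono_left nhdsWithin_le_nhds
  exact hnum.pos_mul_atTop (by positivity) (tendsto_inv_nhdsGT_zero.comp hden)

theorem gain_eq_div_iff {p : ℝ[X]} {n x : ℝ} (hn : n ≠ 1)
    (hx : (derivative (derivative p)).eval x * p.eval x ≠ 0) :
    gain p x = n / (n - 1) ↔
      (C (n - 1) * derivative p ^ 2 - C n * p * derivative (derivative p)).eval x = 0 := by
  rw [gain, div_eq_div_iff hx (sub_ne_zero.2 hn)]
  simp only [eval_sub, eval_mul, eval_pow, eval_C]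
  constructor <;> intro h <;> linarith

end Polynomial

theorem no_zero_in_right_infinite_interval_general (p : Polynomial ℝ)
    (hdeg : 2 ≤ p.natDegree)
    (hp : ∀ x : ℝ, p.eval x ≠ 0)
    (p₀ : ℝ)
    (huniq : ∀ x : ℝ, (derivative p).eval x = 0 → x = p₀)
    (hex : ∃ z : ℝ, p₀ < z ∧ (derivative (derivative p)).eval z = 0)
    (zm : ℝ) (hzm : (derivative (derivative p)).eval zm = 0)
    (hlargest : ∀ z : ℝ, (derivative (derivative p)).eval z = 0 → z ≤ zm)
    (hyp :
      (∀ x ∈ Set.Ioi zm,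
        ¬ IsLocalExtr (fun y : ℝ => ((derivative p).eval y) ^ 2 /
            (((derivative (derivative p)).eval y) * p.eval y)) x) ∨
      (∀ b ∈ Set.Ioi zm,
        IsLocalMin (fun y : ℝ => ((derivative p).eval y) ^ 2 /
            (((derivative (derivative p)).eval y) * p.eval y)) b →
        (p.natDegree : ℝ) / ((p.natDegree : ℝ) - 1) <
          ((derivative p).eval b) ^ 2 /
            (((derivative (derivative p)).eval b) * p.eval b))) :
    ∀ x ∈ Set.Ioi zm,
      (Polynomial.C ((p.natDegree : ℝ) - 1) * (derivative p) ^ 2 -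
        Polynomial.C (p.natDegree : ℝ) * p * derivative (derivative p)).eval x ≠ 0 := by
  obtain ⟨z, hp₀z, hz⟩ := hex
  have hp'zm : (derivative p).eval zm ≠ 0 := fun h =>
    (hp₀z.trans_le (hlargest z hz)).ne' (huniq zm h)
  have hpos : ∀ x ∈ Ioi zm, 0 < (derivative (derivative p)).eval x * p.eval x :=
    eval_derivative_derivative_mul_pos hdeg fun x hx =>
      mul_ne_zero (fun h => (not_le.2 hx) (hlargest x h)) (hp x)
  have hmin : ∀ b ∈ Ioi zm, IsLocalMin (gain p) b →
      (p.natDegree : ℝ) / (p.natDegree - 1) < gain p b := by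
    rcases hyp with hnoext | hminval
    · exact fun b hb hbmin => absurd hbmin.isExtr (hnoext b hb)
    · exact hminval
  have hK := ne_of_forall_isLocalMin_lt (continuousOn_gain fun x hx => (hpos x hx).ne')
    (tendsto_gain_nhdsGT hzm hp'zm (eventually_nhdsWithin_of_forall hpos)) (tendsto_gain_atTop hdeg)
    hmin
  have hn1 : (p.natDegree : ℝ) ≠ 1 := by norm_cast; omega
  exact fun x hx hΔ => hK x hx ((gain_eq_div_iff hn1 (hpos x hx).ne').2 hΔ)

/-- in the right infinite interval (z_m, +∞), if K has no local extremum,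
or all local minimum values of K there exceed n/(n−1), then Δ has no zeros there. -/
theorem no_zero_in_right_infinite_interval (p : Polynomial ℝ)
    (hdeg : 2 ≤ p.natDegree) (heven : Even p.natDegree)
    (hp : ∀ x : ℝ, p.eval x ≠ 0)
    (p₀ : ℝ) (hp₀ : (derivative p).eval p₀ = 0)
    (huniq : ∀ x : ℝ, (derivative p).eval x = 0 → x = p₀)
    (hsimple : Polynomial.rootMultiplicity p₀ (derivative p) = 1)
    (hex : ∃ z : ℝ, p₀ < z ∧ (derivative (derivative p)).eval z = 0)
    (zm : ℝ) (hzm : (derivative (derivative p)).eval zm = 0)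
    (hlargest : ∀ z : ℝ, (derivative (derivative p)).eval z = 0 → z ≤ zm)
    (hyp :
      (∀ x ∈ Set.Ioi zm,
        ¬ IsLocalExtr (fun y : ℝ => ((derivative p).eval y) ^ 2 /
            (((derivative (derivative p)).eval y) * p.eval y)) x) ∨
      (∀ b ∈ Set.Ioi zm,
        IsLocalMin (fun y : ℝ => ((derivative p).eval y) ^ 2 /
            (((derivative (derivative p)).eval y) * p.eval y)) b →
        (p.natDegree : ℝ) / ((p.natDegree : ℝ) - 1) <
          ((derivative p).eval b) ^ 2 /
            (((derivative (derivative p)).eval b) * p.eval b))) :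
    ∀ x ∈ Set.Ioi zm,
      (Polynomial.C ((p.natDegree : ℝ) - 1) * (derivative p) ^ 2 -
        Polynomial.C (p.natDegree : ℝ) * p * derivative (derivative p)).eval x ≠ 0 :=
  no_zero_in_right_infinite_interval_general p hdeg hp p₀ huniq hex zm hzm hlargest hyp
end

section
/- Let p be a real polynomial of even degree n ≥ 2 such that p has no real zeros and p' has exactly one real zero p₀, which is simple. Suppose p'' has at least one real zero in (p₀, +∞), and let z_m be the largest real zero of p''. Let K(x) = p'(x)²/(p''(x)·p(x)) on (z_m, +∞) (note p(x)·p''(x) > 0 there). If there exists a point b ∈ (z_m, +∞) at which K has a local minimum and K(b) ≤ n/(n−1), then the polynomial Δ(x) = (n−1)·p'(x)² − n·p(x)·p''(x) has a zero in (z_m, +∞). -/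
open Polynomial

/-- in the right infinite interval (z_m, +∞), if K has a local minimum
point b with K(b) ≤ n/(n−1), then Δ has a zero in (z_m, +∞). -/
theorem zero_in_right_infinite_interval (p : Polynomial ℝ)
    (hdeg : 2 ≤ p.natDegree) (heven : Even p.natDegree)
    (hp : ∀ x : ℝ, p.eval x ≠ 0)
    (p₀ : ℝ) (hp₀ : (derivative p).eval p₀ = 0)
    (huniq : ∀ x : ℝ, (derivative p).eval x = 0 → x = p₀)
    (hsimple : Polynomial.rootMultiplicity p₀ (derivative p) = 1)
    (hex : ∃ z : ℝ, p₀ < z ∧ (derivative (derivative p)).eval z = 0)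
    (zm : ℝ) (hzm : (derivative (derivative p)).eval zm = 0)
    (hlargest : ∀ z : ℝ, (derivative (derivative p)).eval z = 0 → z ≤ zm)
    (b : ℝ) (hb : b ∈ Set.Ioi zm)
    (hmin : IsLocalMin (fun y : ℝ => ((derivative p).eval y) ^ 2 /
        (((derivative (derivative p)).eval y) * p.eval y)) b)
    (hle : ((derivative p).eval b) ^ 2 /
        (((derivative (derivative p)).eval b) * p.eval b) ≤
      (p.natDegree : ℝ) / ((p.natDegree : ℝ) - 1)) :
    ∃ x ∈ Set.Ioi zm,
      (Polynomial.C ((p.natDegree : ℝ) - 1) * (derivative p) ^ 2 -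
        Polynomial.C (p.natDegree : ℝ) * p * derivative (derivative p)).eval x = 0 := by
  obtain ⟨m, hm⟩ : ∃ m, p.natDegree = m + 2 := ⟨p.natDegree - 2, by omega⟩
  set p1 := derivative p with hp1def
  set p2 := derivative p1 with hp2def
  have hpne : p ≠ 0 := fun h => hp 0 (by simp [h])
  have hlc : p.leadingCoeff ≠ 0 := leadingCoeff_ne_zero.mpr hpne
  -- degrees and leading coefficients
  have hd1 : p1.degree = ((m + 1 : ℕ) : WithBot ℕ) := by
    rw [hp1def, degree_derivative_eq p (by omega)]
    congr 1; omega
  have hn1 : p1.natDegree = m + 1 := natDegree_eq_of_degree_eq_some hd1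
  have hd2 : p2.degree = ((m : ℕ) : WithBot ℕ) := by
    rw [hp2def, degree_derivative_eq p1 (by omega)]
    congr 1; omega
  have hn2 : p2.natDegree = m := natDegree_eq_of_degree_eq_some hd2
  have hlc1 : p1.leadingCoeff = p.leadingCoeff * (m + 2 : ℕ) := by
    rw [leadingCoeff, hn1, hp1def, coeff_derivative, leadingCoeff, hm]
    push_cast; ring
  have hlc2 : p2.leadingCoeff = p.leadingCoeff * (m + 2 : ℕ) * (m + 1 : ℕ) := by
    have hco : p1.coeff (m + 1) = p1.leadingCoeff := by rw [leadingCoeff, hn1]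
    rw [leadingCoeff, hn2, hp2def, coeff_derivative, hco, hlc1]
    push_cast; ring
  have hp2ne : p2 ≠ 0 := fun h => by simp [h] at hd2
  -- q = p * p2 has positive leading coefficient
  set q := p * p2 with hqdef
  have hlcq : 0 < q.leadingCoeff := by
    rw [hqdef, leadingCoeff_mul, hlc2]
    have h1 : (0:ℝ) < ((m + 2 : ℕ) : ℝ) * ((m + 1 : ℕ) : ℝ) := by positivity
    have h2 : (0:ℝ) < p.leadingCoeff * p.leadingCoeff := by
      rcases hlc.lt_or_gt with h | h
      · nlinarith
      · nlinarith
    calc (0:ℝ) < p.leadingCoeff * p.leadingCoeff * (((m + 2 : ℕ) : ℝ) * ((m + 1 : ℕ) : ℝ)) := by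
          nlinarith
      _ = p.leadingCoeff * (p.leadingCoeff * ((m + 2 : ℕ) : ℝ) * ((m + 1 : ℕ) : ℝ)) := by ring
  have hqne : q ≠ 0 := fun h => by simp [h] at hlcq
  have hqdeg : 0 < q.degree := by
    rw [← natDegree_pos_iff_degree_pos, hqdef, natDegree_mul hpne hp2ne, hm, hn2]
    omega
  have htend : Filter.Tendsto (fun x => eval x q) Filter.atTop Filter.atTop :=
    q.tendsto_atTop_of_leadingCoeff_nonneg hqdeg hlcq.le
  -- q never vanishes on (zm, ∞)
  have hne : ∀ x ∈ Set.Ioi zm, eval x q ≠ 0 := by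
    intro x hx
    have hx2 : eval x p2 ≠ 0 := fun h => absurd (hlargest x h) (not_le.mpr hx)
    simp only [hqdef, eval_mul]
    exact mul_ne_zero (hp x) hx2
  -- q eventually positive: pick c
  obtain ⟨c, hc⟩ := ((htend.eventually_ge_atTop 1).and (Filter.eventually_gt_atTop zm)).exists
  obtain ⟨hc1, hczm⟩ := hc
  -- q is positive on all of (zm, ∞)
  have hpos : ∀ x ∈ Set.Ioi zm, 0 < eval x q := by
    intro x hx
    rcases (hne x hx).lt_or_gt with hneg | hposx
    · exfalso
      have hcont : ContinuousOn (fun t => eval t q) (Set.uIcc x c) :=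
        (q.continuous).continuousOn
      have h0 : (0:ℝ) ∈ Set.uIcc (eval x q) (eval c q) := by
        rw [Set.mem_uIcc]; left; constructor <;> linarith
      obtain ⟨y, hy, hy0⟩ := intermediate_value_uIcc hcont h0
      have hyIoi : y ∈ Set.Ioi zm := by
        rcases Set.mem_uIcc.mp hy with ⟨h1, _⟩ | ⟨h1, _⟩
        · exact lt_of_lt_of_le hx h1
        · exact lt_of_lt_of_le hczm h1
      exact hne y hyIoi hy0
    · exact hposx
  -- zm > p₀, so p1(zm) ≠ 0
  obtain ⟨z, hz1, hz2⟩ := hex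
  have hzmgt : p₀ < zm := lt_of_lt_of_le hz1 (hlargest z hz2)
  have hp1zm : eval zm p1 ≠ 0 := fun h => absurd (huniq zm h) (ne_of_gt hzmgt)
  -- the Δ polynomial
  set Δ := Polynomial.C ((p.natDegree : ℝ) - 1) * p1 ^ 2 -
      Polynomial.C (p.natDegree : ℝ) * p * p2 with hΔdef
  have hΔeval : ∀ x : ℝ, Δ.eval x =
      ((p.natDegree : ℝ) - 1) * (eval x p1) ^ 2 -
        (p.natDegree : ℝ) * eval x p * eval x p2 := by
    intro x; simp [hΔdef]
  have hncast : (2:ℝ) ≤ (p.natDegree : ℝ) := by exact_mod_cast hdeg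
  -- Δ(zm) > 0
  have hΔzm : 0 < Δ.eval zm := by
    rw [hΔeval, hzm]
    have h2 : 0 < (eval zm p1) ^ 2 := by
      have := pow_pos (abs_pos.mpr hp1zm) 2
      rwa [sq_abs] at this
    nlinarith [h2]
  -- Δ(b) ≤ 0
  have hDb : 0 < eval b p2 * eval b p := by
    have := hpos b hb
    simp only [hqdef, eval_mul] at this
    linarith [mul_comm (eval b p) (eval b p2)]
  have hΔb : Δ.eval b ≤ 0 := by
    rw [hΔeval]
    have hnm1 : (0:ℝ) < (p.natDegree : ℝ) - 1 := by linarith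
    rw [div_le_div_iff₀ hDb hnm1] at hle
    nlinarith [hle]
  -- intermediate value theorem on [zm, b]
  have hcont : ContinuousOn (fun t => Δ.eval t) (Set.Icc zm b) :=
    (Δ.continuous).continuousOn
  have h0 : (0:ℝ) ∈ Set.Ico (Δ.eval b) (Δ.eval zm) := ⟨hΔb, hΔzm⟩
  obtain ⟨x, hx, hx0⟩ := intermediate_value_Ioc' (le_of_lt hb) hcont h0
  exact ⟨x, hx.1, hx0⟩
end

section
/- Let p be a real polynomial of even degree n ≥ 2 with no real zeros, and let z₁ < z₂ be real zeros of p'' such that p'' has no zeros in (z₁, z₂), p' has no zeros in [z₁, z₂], and p(x)·p''(x) > 0 for all x ∈ (z₁, z₂). Let K(x) = p'(x)²/(p''(x)·p(x)) on (z₁, z₂). If every point b ∈ (z₁, z₂) at which K has a local minimum satisfies K(b) > n/(n−1), then the polynomial Δ(x) = (n−1)·p'(x)² − n·p(x)·p''(x) has no zeros in (z₁, z₂). -/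
open Polynomial

/-- in a finite interval (z₁, z₂) of 2qπ degree, if every local minimum
value of K exceeds n/(n−1), then Δ has no zeros in (z₁, z₂). -/
theorem no_zero_in_finite_interval (p : Polynomial ℝ)
    (hdeg : 2 ≤ p.natDegree) (heven : Even p.natDegree)
    (hp : ∀ x : ℝ, p.eval x ≠ 0)
    (z₁ z₂ : ℝ) (hlt : z₁ < z₂)
    (hz₁ : (derivative (derivative p)).eval z₁ = 0)
    (hz₂ : (derivative (derivative p)).eval z₂ = 0)
    (hno : ∀ x ∈ Set.Ioo z₁ z₂, (derivative (derivative p)).eval x ≠ 0)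
    (hp' : ∀ x ∈ Set.Icc z₁ z₂, (derivative p).eval x ≠ 0)
    (hpos : ∀ x ∈ Set.Ioo z₁ z₂, 0 < p.eval x * (derivative (derivative p)).eval x)
    (hmin : ∀ b ∈ Set.Ioo z₁ z₂,
      IsLocalMin (fun y : ℝ => ((derivative p).eval y) ^ 2 /
          (((derivative (derivative p)).eval y) * p.eval y)) b →
      (p.natDegree : ℝ) / ((p.natDegree : ℝ) - 1) <
        ((derivative p).eval b) ^ 2 /
          (((derivative (derivative p)).eval b) * p.eval b)) :
    ∀ x ∈ Set.Ioo z₁ z₂,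
      (Polynomial.C ((p.natDegree : ℝ) - 1) * (derivative p) ^ 2 -
        Polynomial.C (p.natDegree : ℝ) * p * derivative (derivative p)).eval x ≠ 0 := by
  intro x hx hΔ
  set n : ℝ := (p.natDegree : ℝ) with hn
  have hn2 : (2:ℝ) ≤ n := by rw [hn]; exact_mod_cast hdeg
  have hn1 : (0:ℝ) < n - 1 := by linarith
  set K : ℝ → ℝ := fun y : ℝ => ((derivative p).eval y) ^ 2 /
      (((derivative (derivative p)).eval y) * p.eval y) with hK
  have hcont : Continuous K ∨ True := Or.inr trivial
  -- continuity of component functions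
  have c1 : Continuous fun y : ℝ => ((derivative p).eval y) ^ 2 :=
    ((derivative p).continuous_aeval).pow 2
  have c2 : Continuous fun y : ℝ => ((derivative (derivative p)).eval y) * p.eval y :=
    ((derivative (derivative p)).continuous_aeval).mul p.continuous_aeval
  have hKc : ∀ y ∈ Set.Ioo z₁ z₂, ContinuousAt K y := by
    intro y hy
    have hd : ((derivative (derivative p)).eval y) * p.eval y ≠ 0 := by
      have := hpos y hy
      intro h
      rw [mul_comm] at h
      simp [h] at this
    exact (c1.continuousAt).div (c2.continuousAt) hd
  have hΔ' : (n - 1) * ((derivative p).eval x) ^ 2 =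
      n * (p.eval x * (derivative (derivative p)).eval x) := by
    have := hΔ
    simp only [eval_sub, eval_mul, eval_pow, eval_C] at this
    linarith
  have hDx : 0 < ((derivative (derivative p)).eval x) * p.eval x := by
    rw [mul_comm]; exact hpos x hx
  have hKx : K x = n / (n - 1) := by
    rw [hK]
    rw [div_eq_div_iff hDx.ne' hn1.ne']
    rw [mul_comm (p.eval x)] at hΔ'
    linarith
  -- function h whose positivity means K > n/(n-1)
  set h : ℝ → ℝ := fun y : ℝ => ((derivative p).eval y) ^ 2 -
      (n / (n - 1)) * (((derivative (derivative p)).eval y) * p.eval y) with hh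
  have hhc : Continuous h := c1.sub (continuous_const.mul c2)
  have hKgt : ∀ y ∈ Set.Ioo z₁ z₂, 0 < h y → n / (n - 1) < K y := by
    intro y hy hhy
    have hD : 0 < ((derivative (derivative p)).eval y) * p.eval y := by
      rw [mul_comm]; exact hpos y hy
    rw [hK, lt_div_iff₀ hD]
    simp only [hh] at hhy
    linarith
  -- h is positive at z₁ and z₂
  have hz₁pos : 0 < h z₁ := by
    have := hp' z₁ ⟨le_refl _, hlt.le⟩
    simp only [hh, hz₁, zero_mul, mul_zero, sub_zero]
    positivity
  have hz₂pos : 0 < h z₂ := by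
    have := hp' z₂ ⟨hlt.le, le_refl _⟩
    simp only [hh, hz₂, zero_mul, mul_zero, sub_zero]
    positivity
  -- find a ∈ (z₁, x) with h a > 0
  obtain ⟨x1, hx2⟩ := hx
  have ha : ∃ a ∈ Set.Ioo z₁ x, 0 < h a := by
    have h1 : ∀ᶠ y in nhdsWithin z₁ (Set.Ioi z₁), 0 < h y :=
      nhdsWithin_le_nhds ((isOpen_lt continuous_const hhc).mem_nhds hz₁pos)
    have h2 : ∀ᶠ y in nhdsWithin z₁ (Set.Ioi z₁), y ∈ Set.Ioo z₁ x :=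
      Ioo_mem_nhdsGT_of_mem ⟨le_refl _, x1⟩
    obtain ⟨a, ha1, ha2⟩ := (h1.and h2).exists
    exact ⟨a, ha2, ha1⟩
  have hb : ∃ b ∈ Set.Ioo x z₂, 0 < h b := by
    have h1 : ∀ᶠ y in nhdsWithin z₂ (Set.Iio z₂), 0 < h y :=
      nhdsWithin_le_nhds ((isOpen_lt continuous_const hhc).mem_nhds hz₂pos)
    have h2 : ∀ᶠ y in nhdsWithin z₂ (Set.Iio z₂), y ∈ Set.Ioo x z₂ :=
      Ioo_mem_nhdsLT_of_mem ⟨hx2, le_refl _⟩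
    obtain ⟨b, hb1, hb2⟩ := (h1.and h2).exists
    exact ⟨b, hb2, hb1⟩
  obtain ⟨a, ⟨haz, hax⟩, hapos⟩ := ha
  obtain ⟨b, ⟨hbx, hbz⟩, hbpos⟩ := hb
  have hab : Set.Icc a b ⊆ Set.Ioo z₁ z₂ := fun y hy =>
    ⟨lt_of_lt_of_le haz hy.1, lt_of_le_of_lt hy.2 hbz⟩
  have hKab : ContinuousOn K (Set.Icc a b) := fun y hy =>
    (hKc y (hab hy)).continuousWithinAt
  have hne : (Set.Icc a b).Nonempty := ⟨x, hax.le, hbx.le⟩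
  obtain ⟨c, hc, hmin'⟩ := isCompact_Icc.exists_isMinOn hne hKab
  have hxmem : x ∈ Set.Icc a b := ⟨hax.le, hbx.le⟩
  have hKc_le : K c ≤ n / (n - 1) := hKx ▸ (hmin' hxmem : K c ≤ K x)
  have hKa : n / (n - 1) < K a := hKgt a ⟨haz, hax.trans hx2⟩ hapos
  have hKb : n / (n - 1) < K b := hKgt b ⟨x1.trans hbx, hbz⟩ hbpos
  have hca : c ≠ a := fun hca => by rw [hca] at hKc_le; linarith
  have hcb : c ≠ b := fun hcb => by rw [hcb] at hKc_le; linarith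
  have hcmem : c ∈ Set.Ioo a b := ⟨lt_of_le_of_ne hc.1 (Ne.symm hca), lt_of_le_of_ne hc.2 hcb⟩
  have hlocal : IsLocalMin K c :=
    hmin'.isLocalMin (Filter.mem_of_superset (isOpen_Ioo.mem_nhds hcmem) Set.Ioo_subset_Icc_self)
  have := hmin c (hab hc) hlocal
  have : n / (n - 1) < K c := this
  linarith
end

section
/- Let p be a real polynomial of even degree n ≥ 2 with no real zeros, and let z₁ < z₂ be real zeros of p'' such that p'' has no zeros in (z₁, z₂), p' has no zeros in [z₁, z₂], and p(x)·p''(x) > 0 for all x ∈ (z₁, z₂). Let K(x) = p'(x)²/(p''(x)·p(x)) on (z₁, z₂). If there exists a point b ∈ (z₁, z₂) at which K has a local minimum and K(b) ≤ n/(n−1), then the polynomial Δ(x) = (n−1)·p'(x)² − n·p(x)·p''(x) has a zero in (z₁, z₂). -/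
open Polynomial

/-- in a finite interval (z₁, z₂) of 2qπ degree, if K has a local minimum
point b with K(b) ≤ n/(n−1), then Δ has a zero in (z₁, z₂). -/
theorem zero_in_finite_interval (p : Polynomial ℝ)
    (hdeg : 2 ≤ p.natDegree) (heven : Even p.natDegree)
    (hp : ∀ x : ℝ, p.eval x ≠ 0)
    (z₁ z₂ : ℝ) (hlt : z₁ < z₂)
    (hz₁ : (derivative (derivative p)).eval z₁ = 0)
    (hz₂ : (derivative (derivative p)).eval z₂ = 0)
    (hno : ∀ x ∈ Set.Ioo z₁ z₂, (derivative (derivative p)).eval x ≠ 0)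
    (hp' : ∀ x ∈ Set.Icc z₁ z₂, (derivative p).eval x ≠ 0)
    (hpos : ∀ x ∈ Set.Ioo z₁ z₂, 0 < p.eval x * (derivative (derivative p)).eval x)
    (b : ℝ) (hb : b ∈ Set.Ioo z₁ z₂)
    (hmin : IsLocalMin (fun y : ℝ => ((derivative p).eval y) ^ 2 /
        (((derivative (derivative p)).eval y) * p.eval y)) b)
    (hle : ((derivative p).eval b) ^ 2 /
        (((derivative (derivative p)).eval b) * p.eval b) ≤
      (p.natDegree : ℝ) / ((p.natDegree : ℝ) - 1)) :
    ∃ x ∈ Set.Ioo z₁ z₂,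
      (Polynomial.C ((p.natDegree : ℝ) - 1) * (derivative p) ^ 2 -
        Polynomial.C (p.natDegree : ℝ) * p * derivative (derivative p)).eval x = 0 := by
  set n : ℝ := (p.natDegree : ℝ) with hn
  have hn2 : (2 : ℝ) ≤ n := by rw [hn]; exact_mod_cast hdeg
  have hn1 : (0 : ℝ) < n - 1 := by linarith
  set Δ : Polynomial ℝ := Polynomial.C (n - 1) * (derivative p) ^ 2 -
      Polynomial.C n * p * derivative (derivative p) with hΔ
  have hΔeval : ∀ x : ℝ, Δ.eval x =
      (n - 1) * ((derivative p).eval x) ^ 2 -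
        n * (p.eval x * (derivative (derivative p)).eval x) := by
    intro x; simp [hΔ]; ring
  -- Δ(z₁) > 0
  have hΔz₁ : 0 < Δ.eval z₁ := by
    rw [hΔeval, hz₁]
    have h1 : (derivative p).eval z₁ ≠ 0 := hp' z₁ ⟨le_refl _, le_of_lt hlt⟩
    have := pow_pos (abs_pos.mpr h1) 2
    nlinarith [sq_nonneg ((derivative p).eval z₁), sq_abs ((derivative p).eval z₁)]
  -- Δ(b) ≤ 0
  have hposb : 0 < p.eval b * (derivative (derivative p)).eval b := hpos b hb
  have hposb' : 0 < (derivative (derivative p)).eval b * p.eval b := by linarith [mul_comm (p.eval b) ((derivative (derivative p)).eval b)]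
  have hΔb : Δ.eval b ≤ 0 := by
    rw [hΔeval]
    rw [div_le_div_iff₀ hposb' hn1] at hle
    nlinarith
  -- IVT
  rcases eq_or_lt_of_le hΔb with heq | hlt'
  · exact ⟨b, hb, heq⟩
  · have hcont : ContinuousOn (fun x => Δ.eval x) (Set.Icc z₁ b) :=
      (Polynomial.continuous_aeval Δ).continuousOn
    have := intermediate_value_Ioo' (le_of_lt hb.1) hcont
    have h0 : (0 : ℝ) ∈ Set.Ioo (Δ.eval b) (Δ.eval z₁) := ⟨hlt', hΔz₁⟩
    obtain ⟨c, hc, hc0⟩ := this h0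
    exact ⟨c, ⟨hc.1, lt_trans hc.2 hb.2⟩, hc0⟩
end

section
/- Let p be a real polynomial of even degree n ≥ 2 such that p has no real zeros and p' has exactly one real zero p₀, which is simple. Suppose every real zero of p'' is strictly greater than p₀, p'' has at least one real zero, and the number of real zeros of p'' in (p₀, +∞), counted with multiplicity, is odd. Let z_m be the largest real zero of p'' and K(x) = p'(x)²/(p''(x)·p(x)). Assume there exists a real point b with K(b) ≤ n/(n−1) such that either b ∈ (z_m, +∞) and K has a local minimum at b, or b lies in an interval (z₁, z₂) between adjacent real zeros z₁ < z₂ of p'' with p(x)·p''(x) > 0 on (z₁, z₂) and K restricted to (z₁, z₂) has a local minimum at b. Then the polynomial Δ(x) = (n−1)·p'(x)² − n·p(x)·p''(x) has at least one real zero. -/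
open Polynomial

/-- Sign persistence: a continuous function with no zeros on `[a,b]` that is positive at `b`
is positive at `a`. -/
lemma pos_of_no_zero_of_pos {f : ℝ → ℝ} (hf : Continuous f) {a b : ℝ} (hab : a ≤ b)
    (hne : ∀ x ∈ Set.Icc a b, f x ≠ 0) (hb : 0 < f b) : 0 < f a := by
  rcases lt_trichotomy (f a) 0 with h | h | h
  · exfalso
    have := intermediate_value_Icc hab hf.continuousOn
    have h0 : (0:ℝ) ∈ Set.Icc (f a) (f b) := ⟨le_of_lt h, le_of_lt hb⟩
    obtain ⟨x, hx, hfx⟩ := this h0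
    exact hne x hx hfx
  · exact absurd h (hne a ⟨le_refl a, hab⟩)
  · exact h

/-- odd case to the right of p₀; if K has a local minimum point b with
K(b) ≤ n/(n−1), either in the right infinite interval (z_m, +∞) or in a finite interval
of 2qπ degree between adjacent real zeros of p'', then Δ has at least one real zero. -/
theorem real_zero_odd_right_case (p : Polynomial ℝ)
    (hdeg : 2 ≤ p.natDegree) (heven : Even p.natDegree)
    (hp : ∀ x : ℝ, p.eval x ≠ 0)
    (p₀ : ℝ) (hp₀ : (derivative p).eval p₀ = 0)
    (huniq : ∀ x : ℝ, (derivative p).eval x = 0 → x = p₀)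
    (hsimple : Polynomial.rootMultiplicity p₀ (derivative p) = 1)
    (hright : ∀ z : ℝ, (derivative (derivative p)).eval z = 0 → p₀ < z)
    (hex : ∃ z : ℝ, (derivative (derivative p)).eval z = 0)
    (hodd : Odd (Multiset.card
      ((derivative (derivative p)).roots.filter (fun z => p₀ < z))))
    (zm : ℝ) (hzm : (derivative (derivative p)).eval zm = 0)
    (hlargest : ∀ z : ℝ, (derivative (derivative p)).eval z = 0 → z ≤ zm)
    (hyp : ∃ b : ℝ,
      ((derivative p).eval b) ^ 2 /
          (((derivative (derivative p)).eval b) * p.eval b) ≤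
        (p.natDegree : ℝ) / ((p.natDegree : ℝ) - 1) ∧
      ((b ∈ Set.Ioi zm ∧
          IsLocalMin (fun y : ℝ => ((derivative p).eval y) ^ 2 /
            (((derivative (derivative p)).eval y) * p.eval y)) b) ∨
        (∃ z₁ z₂ : ℝ, z₁ < z₂ ∧
          (derivative (derivative p)).eval z₁ = 0 ∧
          (derivative (derivative p)).eval z₂ = 0 ∧
          (∀ x ∈ Set.Ioo z₁ z₂, (derivative (derivative p)).eval x ≠ 0) ∧
          (∀ x ∈ Set.Ioo z₁ z₂, 0 < p.eval x * (derivative (derivative p)).eval x) ∧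
          b ∈ Set.Ioo z₁ z₂ ∧
          IsLocalMin (fun y : ℝ => ((derivative p).eval y) ^ 2 /
            (((derivative (derivative p)).eval y) * p.eval y)) b))) :
    ∃ x : ℝ,
      (Polynomial.C ((p.natDegree : ℝ) - 1) * (derivative p) ^ 2 -
        Polynomial.C (p.natDegree : ℝ) * p * derivative (derivative p)).eval x = 0 := by
  set n : ℝ := (p.natDegree : ℝ) with hn
  have hn2 : (2:ℝ) ≤ n := by rw [hn]; exact_mod_cast hdeg
  have hn1 : (0:ℝ) < n - 1 := by linarith
  set Δ : Polynomial ℝ := Polynomial.C ((p.natDegree : ℝ) - 1) * (derivative p) ^ 2 -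
        Polynomial.C (p.natDegree : ℝ) * p * derivative (derivative p) with hΔ
  have hΔeval : ∀ x : ℝ, Δ.eval x = (n-1) * ((derivative p).eval x)^2
      - n * (p.eval x * (derivative (derivative p)).eval x) := by
    intro x; simp [hΔ]; ring
  obtain ⟨b, hKb, hcase⟩ := hyp
  -- key sub-lemma: if some zero z of p'' satisfies z ≤ b and p(b)·p''(b) > 0, done.
  have key : ∀ z : ℝ, z ≤ b → (derivative (derivative p)).eval z = 0 →
      0 < p.eval b * (derivative (derivative p)).eval b →
      ∃ x : ℝ, Δ.eval x = 0 := by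
    intro z hzb hz hpos
    have hD : 0 < ((derivative (derivative p)).eval b) * p.eval b := by
      rw [mul_comm]; exact hpos
    have hkey : ((derivative p).eval b) ^ 2 * (n - 1) ≤
        n * (((derivative (derivative p)).eval b) * p.eval b) :=
      (div_le_div_iff₀ hD hn1).mp hKb
    have hDb : Δ.eval b ≤ 0 := by
      rw [hΔeval]; nlinarith
    have hDz : 0 ≤ Δ.eval z := by
      rw [hΔeval, hz]
      have := sq_nonneg ((derivative p).eval z)
      nlinarith
    have hc : ContinuousOn (fun x : ℝ => Δ.eval x) (Set.Icc z b) :=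
      (Polynomial.continuous Δ).continuousOn
    have h0 : (0:ℝ) ∈ Set.Icc (Δ.eval b) (Δ.eval z) := ⟨hDb, hDz⟩
    obtain ⟨x, _, hx⟩ := intermediate_value_Icc' hzb hc h0
    exact ⟨x, hx⟩
  rcases hcase with ⟨hbI, _⟩ | ⟨z₁, z₂, h12, hz₁, hz₂, _, hpos, hbI, _⟩
  · -- right infinite interval: need p(b)·p''(b) > 0
    have hbzm : zm < b := hbI
    -- p ≠ 0
    have hpne : p ≠ 0 := fun h => hp 0 (by simp [h])
    have hane : p.leadingCoeff ≠ 0 := leadingCoeff_ne_zero.mpr hpne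
    -- coeff computation for p''
    have hm1 : p.natDegree - 1 + 1 = p.natDegree := by omega
    have hm2 : p.natDegree - 2 + 1 = p.natDegree - 1 := by omega
    have hc2 : (derivative (derivative p)).coeff (p.natDegree - 2) =
        p.leadingCoeff * (p.natDegree - 1 : ℕ) * (p.natDegree : ℕ) := by
      have e1 : ((p.natDegree - 1 : ℕ) : ℝ) + 1 = (p.natDegree : ℝ) := by
        exact_mod_cast congrArg (Nat.cast : ℕ → ℝ) hm1
      have e2 : ((p.natDegree - 2 : ℕ) : ℝ) + 1 = ((p.natDegree - 1 : ℕ) : ℝ) := by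
        exact_mod_cast congrArg (Nat.cast : ℕ → ℝ) hm2
      rw [coeff_derivative, hm2, coeff_derivative, hm1]
      push_cast [e1, e2]
      unfold Polynomial.leadingCoeff
      ring
    have hc2ne : (derivative (derivative p)).coeff (p.natDegree - 2) ≠ 0 := by
      rw [hc2]
      have h1 : ((p.natDegree - 1 : ℕ) : ℝ) ≠ 0 := Nat.cast_ne_zero.mpr (by omega)
      have h2 : ((p.natDegree : ℕ) : ℝ) ≠ 0 := Nat.cast_ne_zero.mpr (by omega)
      exact mul_ne_zero (mul_ne_zero hane h1) h2
    have hle : (derivative (derivative p)).natDegree ≤ p.natDegree - 2 := by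
      have h1 := natDegree_derivative_le (derivative p)
      have h2 := natDegree_derivative_le p
      omega
    have hndeg : (derivative (derivative p)).natDegree = p.natDegree - 2 :=
      le_antisymm hle (le_natDegree_of_ne_zero hc2ne)
    have hp2ne : derivative (derivative p) ≠ 0 := fun h => hc2ne (by simp [h])
    have hlc2 : (derivative (derivative p)).leadingCoeff =
        p.leadingCoeff * (p.natDegree - 1 : ℕ) * (p.natDegree : ℕ) := by
      rw [Polynomial.leadingCoeff, hndeg, hc2]
    -- q := p * p''
    set q : Polynomial ℝ := p * derivative (derivative p) with hq
    have hqne : q ≠ 0 := mul_ne_zero hpne hp2ne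
    have hqlc : 0 < q.leadingCoeff := by
      rw [hq, leadingCoeff_mul, hlc2]
      have h1 : (0:ℝ) < ((p.natDegree - 1 : ℕ) : ℝ) := Nat.cast_pos.mpr (by omega)
      have h2 : (0:ℝ) < ((p.natDegree : ℕ) : ℝ) := Nat.cast_pos.mpr (by omega)
      have hsq : (0:ℝ) < p.leadingCoeff ^ 2 := by positivity
      calc (0:ℝ) < p.leadingCoeff ^ 2 * ((p.natDegree - 1 : ℕ) : ℝ) * ((p.natDegree : ℕ) : ℝ) := by
            positivity
        _ = p.leadingCoeff * (p.leadingCoeff * ((p.natDegree - 1 : ℕ) : ℝ) * ((p.natDegree : ℕ) : ℝ)) := by ring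
    have hqdeg : 0 < q.degree := by
      rw [Polynomial.natDegree_pos_iff_degree_pos.symm, hq, natDegree_mul hpne hp2ne, hndeg]
      omega
    have htend : Filter.Tendsto (fun x => q.eval x) Filter.atTop Filter.atTop :=
      q.tendsto_atTop_of_leadingCoeff_nonneg hqdeg (le_of_lt hqlc)
    obtain ⟨c, hc1, hc2'⟩ := ((htend.eventually_ge_atTop 1).and
      (Filter.eventually_ge_atTop b)).exists
    -- no zeros of q on [b, c]
    have hne : ∀ x ∈ Set.Icc b c, q.eval x ≠ 0 := by
      intro x hx
      rw [hq, eval_mul]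
      refine mul_ne_zero (hp x) (fun h => ?_)
      have := hlargest x h
      have := hx.1
      linarith
    have hqb : 0 < q.eval b :=
      pos_of_no_zero_of_pos (Polynomial.continuous q) hc2' hne (by linarith)
    have hpos : 0 < p.eval b * (derivative (derivative p)).eval b := by
      have : q.eval b = p.eval b * (derivative (derivative p)).eval b := by
        rw [hq, eval_mul]
      linarith [this ▸ hqb]
    exact key zm (le_of_lt hbzm) hzm hpos
  · exact key z₁ (le_of_lt hbI.1) hz₁ (hpos b hbI)
end

section
/- Let p be a real polynomial of even degree n ≥ 2 such that p has no real zeros and p' has exactly one real zero p₀, which is simple. Suppose every real zero of p'' is strictly greater than p₀, p'' has at least one real zero, and the number of real zeros of p'' in (p₀, +∞), counted with multiplicity, is even. Let z₄ be the smallest real zero of p''. Then the polynomial Δ(x) = (n−1)·p'(x)² − n·p(x)·p''(x) has a zero in the open interval (p₀, z₄); in particular Δ has at least one real zero. -/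
open Polynomial Filter

lemma aux_second_deriv_pos (p : Polynomial ℝ) (p₀ : ℝ) (hdeg : 2 ≤ p.natDegree)
    (hp : ∀ x : ℝ, p.eval x ≠ 0) (hp₀ : (derivative p).eval p₀ = 0)
    (huniq : ∀ x : ℝ, (derivative p).eval x = 0 → x = p₀)
    (hpos : 0 < p.eval p₀)
    (hr : (derivative (derivative p)).eval p₀ ≠ 0) :
    0 < (derivative (derivative p)).eval p₀ := by
  have hcont : Continuous fun x : ℝ => p.eval x := p.continuous
  -- p is positive everywhere
  have hppos : ∀ x : ℝ, 0 < p.eval x := by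
    intro x
    by_contra h
    push_neg at h
    have hlt : p.eval x < 0 := lt_of_le_of_ne h (hp x)
    have h0 : (0:ℝ) ∈ Set.uIcc (p.eval x) (p.eval p₀) :=
      Set.mem_uIcc.2 (Or.inl ⟨hlt.le, hpos.le⟩)
    obtain ⟨c, _, hc⟩ := intermediate_value_uIcc hcont.continuousOn h0
    exact hp c hc
  have hpne : p ≠ 0 := fun h => hp 0 (by simp [h])
  have hdeg1 : 0 < p.degree := by
    rw [Polynomial.degree_eq_natDegree hpne]
    exact_mod_cast (by omega : 0 < p.natDegree)
  have htop : Tendsto (fun x : ℝ => p.eval x) atTop atTop := by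
    have := Polynomial.abs_tendsto_atTop p hdeg1
    refine this.congr' ?_
    filter_upwards with x using abs_of_pos (hppos x)
  obtain ⟨x₁, hx₁val, hx₁gt⟩ :=
    ((htop.eventually_gt_atTop (p.eval p₀)).and (eventually_gt_atTop p₀)).exists
  -- MVT gives a point with positive derivative
  obtain ⟨c, hc, hceq⟩ := exists_hasDerivAt_eq_slope (fun x => p.eval x)
    (fun x => (derivative p).eval x) hx₁gt hcont.continuousOn
    (fun x _ => p.hasDerivAt x)
  have hcpos : 0 < (derivative p).eval c := by
    rw [hceq]
    exact div_pos (by linarith) (by linarith [hc.1])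
  -- derivative positive on (p₀, ∞)
  have hqpos : ∀ x : ℝ, p₀ < x → 0 < (derivative p).eval x := by
    intro x hx
    by_contra h
    push_neg at h
    have hne : (derivative p).eval x ≠ 0 := fun h0 => absurd (huniq x h0) (by linarith)
    have hlt : (derivative p).eval x < 0 := lt_of_le_of_ne h hne
    have h0 : (0:ℝ) ∈ Set.uIcc ((derivative p).eval x) ((derivative p).eval c) :=
      Set.mem_uIcc.2 (Or.inl ⟨hlt.le, hcpos.le⟩)
    obtain ⟨z, hz, hz0⟩ := intermediate_value_uIcc
      (Polynomial.continuous (derivative p)).continuousOn h0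
    have hzgt : p₀ < z := by
      rcases Set.mem_uIcc.1 hz with ⟨h1, _⟩ | ⟨h1, _⟩
      · linarith
      · linarith [hc.1]
    exact absurd (huniq z hz0) (by linarith)
  -- slope argument
  have hd : HasDerivAt (fun x => (derivative p).eval x)
      ((derivative (derivative p)).eval p₀) p₀ := (derivative p).hasDerivAt p₀
  rw [hasDerivAt_iff_tendsto_slope] at hd
  have hd' : Tendsto (slope (fun x => (derivative p).eval x) p₀) (nhdsWithin p₀ (Set.Ioi p₀))
      (nhds ((derivative (derivative p)).eval p₀)) :=
    hd.mono_left (nhdsWithin_mono p₀ (fun x hx => ne_of_gt hx))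
  have hge : 0 ≤ (derivative (derivative p)).eval p₀ := by
    refine ge_of_tendsto hd' ?_
    refine Filter.eventually_of_mem self_mem_nhdsWithin (fun x hx => ?_)
    have hx' : p₀ < x := hx
    rw [slope_def_field]
    apply div_nonneg
    · rw [hp₀]; linarith [hqpos x hx']
    · linarith
  exact lt_of_le_of_ne hge (Ne.symm hr)

/-- if all real zeros of p'' lie strictly right of p₀ and their number in
(p₀, +∞), counted with multiplicity, is even, with z₄ the smallest real zero of p'', then
Δ has a zero in (p₀, z₄). -/
theorem zero_in_interval_even_case (p : Polynomial ℝ)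
    (hdeg : 2 ≤ p.natDegree) (heven : Even p.natDegree)
    (hp : ∀ x : ℝ, p.eval x ≠ 0)
    (p₀ : ℝ) (hp₀ : (derivative p).eval p₀ = 0)
    (huniq : ∀ x : ℝ, (derivative p).eval x = 0 → x = p₀)
    (hsimple : Polynomial.rootMultiplicity p₀ (derivative p) = 1)
    (hright : ∀ z : ℝ, (derivative (derivative p)).eval z = 0 → p₀ < z)
    (hex : ∃ z : ℝ, (derivative (derivative p)).eval z = 0)
    (heven' : Even (Multiset.card
      ((derivative (derivative p)).roots.filter (fun z => p₀ < z))))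
    (z₄ : ℝ) (hz₄ : (derivative (derivative p)).eval z₄ = 0)
    (hsmallest : ∀ z : ℝ, (derivative (derivative p)).eval z = 0 → z₄ ≤ z) :
    ∃ x ∈ Set.Ioo p₀ z₄,
      (Polynomial.C ((p.natDegree : ℝ) - 1) * (derivative p) ^ 2 -
        Polynomial.C (p.natDegree : ℝ) * p * derivative (derivative p)).eval x = 0 := by
  set Δ : Polynomial ℝ := Polynomial.C ((p.natDegree : ℝ) - 1) * (derivative p) ^ 2 -
      Polynomial.C (p.natDegree : ℝ) * p * derivative (derivative p) with hΔ
  have hlt : p₀ < z₄ := hright z₄ hz₄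
  have hrne : (derivative (derivative p)).eval p₀ ≠ 0 := by
    intro h
    exact absurd (hright p₀ h) (lt_irrefl p₀)
  have hqz₄ : (derivative p).eval z₄ ≠ 0 := by
    intro h
    exact absurd (huniq z₄ h) (by linarith)
  -- p(p₀) * p''(p₀) > 0
  have hprod : 0 < p.eval p₀ * (derivative (derivative p)).eval p₀ := by
    rcases lt_or_gt_of_ne (hp p₀) with hneg | hpos
    · -- p(p₀) < 0 : apply aux to -p
      have h1 : 0 < (derivative (derivative (-p))).eval p₀ := by
        apply aux_second_deriv_pos (-p) p₀
        · simpa using hdeg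
        · intro x; simpa using hp x
        · simp [hp₀]
        · intro x hx
          exact huniq x (by simpa using hx)
        · simpa using hneg
        · simpa using hrne
      have h2 : (derivative (derivative p)).eval p₀ < 0 := by
        simp only [map_neg, eval_neg] at h1
        linarith
      exact mul_pos_of_neg_of_neg hneg h2
    · have h1 := aux_second_deriv_pos p p₀ hdeg hp hp₀ huniq hpos hrne
      exact mul_pos hpos h1
  have hn1 : (1:ℝ) ≤ (p.natDegree : ℝ) - 1 := by
    have : (2:ℝ) ≤ (p.natDegree : ℝ) := by exact_mod_cast hdeg
    linarith
  have hΔp₀ : Δ.eval p₀ < 0 := by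
    have : Δ.eval p₀ = -((p.natDegree : ℝ) *
        (p.eval p₀ * (derivative (derivative p)).eval p₀)) := by
      simp [hΔ, hp₀]; ring
    rw [this]
    have hn : (0:ℝ) < (p.natDegree : ℝ) := by
      have : (2:ℝ) ≤ (p.natDegree : ℝ) := by exact_mod_cast hdeg
      linarith
    have := mul_pos hn hprod
    linarith
  have hΔz₄ : 0 < Δ.eval z₄ := by
    have : Δ.eval z₄ = ((p.natDegree : ℝ) - 1) * ((derivative p).eval z₄) ^ 2 := by
      simp [hΔ, hz₄]
    rw [this]
    exact mul_pos (by linarith) (by positivity)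
  have hcont : ContinuousOn (fun x => Δ.eval x) (Set.Icc p₀ z₄) :=
    Δ.continuous.continuousOn
  have h0 : (0:ℝ) ∈ Set.Ioo (Δ.eval p₀) (Δ.eval z₄) := ⟨hΔp₀, hΔz₄⟩
  obtain ⟨x, hx, hx0⟩ := intermediate_value_Ioo hlt.le hcont h0
  exact ⟨x, hx, hx0⟩
end

section
/- Let p be a real polynomial of even degree n ≥ 2 such that p has no real zeros and p' has exactly one real zero p₀, which is simple. Suppose p'' has at least one real zero strictly less than p₀ and at least one real zero strictly greater than p₀, and the number of real zeros of p'' in (p₀, +∞), counted with multiplicity, is even. Let z₄ be the smallest real zero of p'' that is greater than p₀. Then the polynomial Δ(x) = (n−1)·p'(x)² − n·p(x)·p''(x) has a zero in the open interval (p₀, z₄); in particular Δ has at least one real zero. -/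
open Polynomial

private lemma poly_sign_const (q : Polynomial ℝ) (h : ∀ x : ℝ, q.eval x ≠ 0) :
    (∀ x : ℝ, 0 < q.eval x) ∨ (∀ x : ℝ, q.eval x < 0) := by
  rcases lt_or_gt_of_ne (h 0) with h0 | h0
  · right
    intro x
    rcases lt_or_gt_of_ne (h x) with hx | hx
    · exact hx
    · exfalso
      have : (0 : ℝ) ∈ Set.uIcc (q.eval 0) (q.eval x) :=
        Set.mem_uIcc.2 (Or.inl ⟨h0.le, hx.le⟩)
      obtain ⟨c, _, hc⟩ := intermediate_value_uIcc
        (Continuous.continuousOn (q.continuous)) this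
      exact h c hc
  · left
    intro x
    rcases lt_or_gt_of_ne (h x) with hx | hx
    · exfalso
      have : (0 : ℝ) ∈ Set.uIcc (q.eval x) (q.eval 0) :=
        Set.mem_uIcc.2 (Or.inl ⟨hx.le, h0.le⟩)
      obtain ⟨c, _, hc⟩ := intermediate_value_uIcc
        (Continuous.continuousOn (q.continuous)) this
      exact h c hc
    · exact hx

private lemma exists_pos_of_strictMonoOn (q : Polynomial ℝ) (hdeg : 0 < q.degree) (a : ℝ)
    (hmono : StrictMonoOn (fun x => q.eval x) (Set.Ici a)) : ∃ x : ℝ, 0 < q.eval x := by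
  have habs := Polynomial.abs_tendsto_atTop q hdeg
  have h1 : ∀ᶠ x : ℝ in Filter.atTop, |q.eval a| + 1 ≤ |q.eval x| :=
    habs.eventually_ge_atTop _
  have h2 : ∀ᶠ x : ℝ in Filter.atTop, a + 1 ≤ x := Filter.eventually_ge_atTop _
  obtain ⟨x, hx1, hx2⟩ := (h1.and h2).exists
  refine ⟨x, ?_⟩
  have hax : a < x := by linarith
  have hmx : q.eval a < q.eval x := hmono (Set.self_mem_Ici) (le_of_lt hax) hax
  by_contra hle
  push_neg at hle
  have : |q.eval x| = -q.eval x := abs_of_nonpos hle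
  have : q.eval x ≤ -(|q.eval a| + 1) := by
    rw [this] at hx1; linarith
  have := neg_abs_le (q.eval a)
  linarith

/-- p'' has real zeros on both sides of p₀ and the number of its real zeros
in (p₀, +∞), counted with multiplicity, is even; with z₄ the smallest real zero of p''
greater than p₀, Δ has a zero in (p₀, z₄). -/
theorem zero_in_interval_even_both_sides (p : Polynomial ℝ)
    (hdeg : 2 ≤ p.natDegree) (heven : Even p.natDegree)
    (hp : ∀ x : ℝ, p.eval x ≠ 0)
    (p₀ : ℝ) (hp₀ : (derivative p).eval p₀ = 0)
    (huniq : ∀ x : ℝ, (derivative p).eval x = 0 → x = p₀)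
    (hsimple : Polynomial.rootMultiplicity p₀ (derivative p) = 1)
    (hleft : ∃ z : ℝ, z < p₀ ∧ (derivative (derivative p)).eval z = 0)
    (hright : ∃ z : ℝ, p₀ < z ∧ (derivative (derivative p)).eval z = 0)
    (heven' : Even (Multiset.card
      ((derivative (derivative p)).roots.filter (fun z => p₀ < z))))
    (z₄ : ℝ) (hz₄p₀ : p₀ < z₄) (hz₄ : (derivative (derivative p)).eval z₄ = 0)
    (hsmallest : ∀ z : ℝ, (derivative (derivative p)).eval z = 0 → p₀ < z → z₄ ≤ z) :
    ∃ x ∈ Set.Ioo p₀ z₄,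
      (Polynomial.C ((p.natDegree : ℝ) - 1) * (derivative p) ^ 2 -
        Polynomial.C (p.natDegree : ℝ) * p * derivative (derivative p)).eval x = 0 := by
  set P' := derivative p with hP'
  set P'' := derivative P' with hP''
  -- p' is a nonzero polynomial
  have hPdeg : 0 < p.degree := by
    rw [← Polynomial.natDegree_pos_iff_degree_pos]; omega
  have hP'ne : P' ≠ 0 := by
    intro h
    have := Polynomial.natDegree_eq_zero_of_derivative_eq_zero (hP' ▸ h)
    omega
  -- p''(p₀) ≠ 0
  have hc : P''.eval p₀ ≠ 0 := by
    intro h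
    have : 1 < P'.rootMultiplicity p₀ := by
      rw [Polynomial.one_lt_rootMultiplicity_iff_isRoot hP'ne]
      exact ⟨hp₀, h⟩
    omega
  -- sign constancy of p' on Ioi p₀
  have hP'ne' : ∀ x : ℝ, x ≠ p₀ → P'.eval x ≠ 0 := fun x hx h => hx (huniq x h)
  set c := P''.eval p₀ with hcdef
  -- local behaviour: there is x > p₀ with sign of P'(x) = sign of c
  have hslope : Filter.Tendsto (fun x : ℝ => P'.eval x / (x - p₀)) (nhdsWithin p₀ (Set.Ioi p₀))
      (nhds c) := by
    have hd : HasDerivAt (fun x => P'.eval x) c p₀ := by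
      have := P'.hasDerivAt p₀
      rwa [← hP'', ← hcdef] at this
    have := hasDerivAt_iff_tendsto_slope.1 hd
    have hle : nhdsWithin p₀ (Set.Ioi p₀) ≤ nhdsWithin p₀ {p₀}ᶜ :=
      nhdsWithin_mono _ (fun x hx => ne_of_gt hx)
    have h2 := this.mono_left hle
    refine h2.congr' ?_
    filter_upwards [self_mem_nhdsWithin] with x hx
    simp [slope, hp₀, div_eq_inv_mul]
  -- uniform sign of P' on Ioi p₀
  have hsignIoi : (0 < c → ∀ y, p₀ < y → 0 < P'.eval y) ∧
      (c < 0 → ∀ y, p₀ < y → P'.eval y < 0) := by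
    constructor
    · intro hcpos y hy
      -- get a point with positive value
      have hev : ∀ᶠ x in nhdsWithin p₀ (Set.Ioi p₀), 0 < P'.eval x / (x - p₀) :=
        hslope.eventually (eventually_gt_nhds hcpos)
      obtain ⟨x, hxpos, hx⟩ := (hev.and self_mem_nhdsWithin).exists
      have hxval : 0 < P'.eval x := by
        have hsub : 0 < x - p₀ := sub_pos.2 hx
        have := mul_pos hxpos hsub
        rwa [div_mul_cancel₀ _ (ne_of_gt hsub)] at this
      by_contra hle
      push_neg at hle
      have hlt : P'.eval y < 0 := lt_of_le_of_ne hle (hP'ne' y (ne_of_gt hy))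
      have : (0 : ℝ) ∈ Set.uIcc (P'.eval y) (P'.eval x) :=
        Set.mem_uIcc.2 (Or.inl ⟨hlt.le, hxval.le⟩)
      obtain ⟨z, hz, hz0⟩ := intermediate_value_uIcc
        (Continuous.continuousOn (P'.continuous)) this
      have hzgt : p₀ < z := lt_of_lt_of_le (lt_min hy hx) hz.1
      exact hP'ne' z (ne_of_gt hzgt) hz0
    · intro hcneg y hy
      have hev : ∀ᶠ x in nhdsWithin p₀ (Set.Ioi p₀), P'.eval x / (x - p₀) < 0 :=
        hslope.eventually (eventually_lt_nhds hcneg)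
      obtain ⟨x, hxneg, hx⟩ := (hev.and self_mem_nhdsWithin).exists
      have hxval : P'.eval x < 0 := by
        have hsub : 0 < x - p₀ := sub_pos.2 hx
        have := mul_neg_of_neg_of_pos hxneg hsub
        rwa [div_mul_cancel₀ _ (ne_of_gt hsub)] at this
      by_contra hle
      push_neg at hle
      have hlt : 0 < P'.eval y := lt_of_le_of_ne hle (Ne.symm (hP'ne' y (ne_of_gt hy)))
      have : (0 : ℝ) ∈ Set.uIcc (P'.eval x) (P'.eval y) :=
        Set.mem_uIcc.2 (Or.inl ⟨hxval.le, hlt.le⟩)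
      obtain ⟨z, hz, hz0⟩ := intermediate_value_uIcc
        (Continuous.continuousOn (P'.continuous)) this
      have hzgt : p₀ < z := lt_of_lt_of_le (lt_min hx hy) hz.1
      exact hP'ne' z (ne_of_gt hzgt) hz0
  -- key: p(p₀) * c > 0
  have hkey : 0 < p.eval p₀ * c := by
    rcases lt_or_gt_of_ne hc with hcneg | hcpos
    · -- c < 0 : p decreasing on Ici p₀, so p must be negative somewhere, hence everywhere
      have hanti : StrictAntiOn (fun x => p.eval x) (Set.Ici p₀) := by
        apply strictAntiOn_of_deriv_neg (convex_Ici p₀)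
          (Continuous.continuousOn (p.continuous))
        intro x hx
        rw [interior_Ici] at hx
        rw [Polynomial.deriv]
        exact hsignIoi.2 hcneg x hx
      have hmono : StrictMonoOn (fun x => (-p).eval x) (Set.Ici p₀) := by
        intro a ha b hb hab
        simp only [Polynomial.eval_neg, neg_lt_neg_iff]
        exact hanti ha hb hab
      obtain ⟨x, hx⟩ := exists_pos_of_strictMonoOn (-p) (by rwa [Polynomial.degree_neg]) p₀ hmono
      rw [Polynomial.eval_neg] at hx
      have hxneg : p.eval x < 0 := by linarith
      rcases poly_sign_const p hp with hpos | hneg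
      · exact absurd (hpos x) (not_lt.2 hxneg.le)
      · exact mul_pos_of_neg_of_neg (hneg p₀) hcneg
    · -- c > 0 : p increasing on Ici p₀, so p positive somewhere, hence everywhere
      have hmono : StrictMonoOn (fun x => p.eval x) (Set.Ici p₀) := by
        apply strictMonoOn_of_deriv_pos (convex_Ici p₀)
          (Continuous.continuousOn (p.continuous))
        intro x hx
        rw [interior_Ici] at hx
        rw [Polynomial.deriv]
        exact hsignIoi.1 hcpos x hx
      obtain ⟨x, hx⟩ := exists_pos_of_strictMonoOn p hPdeg p₀ hmono
      rcases poly_sign_const p hp with hpos | hneg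
      · exact mul_pos (hpos p₀) hcpos
      · exact absurd (hneg x) (not_lt.2 hx.le)
  -- now IVT on Δ
  set Δ := Polynomial.C ((p.natDegree : ℝ) - 1) * P' ^ 2 -
      Polynomial.C (p.natDegree : ℝ) * p * P'' with hΔ
  have hn2 : (2 : ℝ) ≤ (p.natDegree : ℝ) := by exact_mod_cast hdeg
  have hfp₀ : Δ.eval p₀ < 0 := by
    have : Δ.eval p₀ = -((p.natDegree : ℝ) * (p.eval p₀ * c)) := by
      simp [hΔ, hp₀]; ring
    rw [this]
    have : 0 < (p.natDegree : ℝ) * (p.eval p₀ * c) := mul_pos (by linarith) hkey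
    linarith
  have hfz₄ : 0 < Δ.eval z₄ := by
    have hne : P'.eval z₄ ≠ 0 := hP'ne' z₄ (ne_of_gt hz₄p₀)
    have : Δ.eval z₄ = ((p.natDegree : ℝ) - 1) * (P'.eval z₄) ^ 2 := by
      simp [hΔ, hz₄]
    rw [this]
    have : 0 < (P'.eval z₄) ^ 2 := by positivity
    exact mul_pos (by linarith) this
  have hsub : Set.Ioo (Δ.eval p₀) (Δ.eval z₄) ⊆ (fun x => Δ.eval x) '' Set.Ioo p₀ z₄ :=
    intermediate_value_Ioo (le_of_lt hz₄p₀) (Continuous.continuousOn (Δ.continuous))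
  obtain ⟨x, hx, hfx⟩ := hsub ⟨hfp₀, hfz₄⟩
  exact ⟨x, hx, hfx⟩
end
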